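/- arXiv:1912.00636 — 7 statements merged into one kernel-verified Lean document; each statement's English description precedes it below -/
import Mathlib

section
/- Let {X_n} be an irreducible Markov chain on a finite state space S with initial distribution q, transition matrix P, and stationary distribution π. Let τ₁ be the first return time to the initial state, and let N(x,y,0,τ₁) = Σ_{n=0}^{τ₁-1} 1{X_n = x, X_{n+1} = y} be the number of transitions from x to y before time τ₁. Then for all x, y ∈ S, π(x)P(x,y) = E_{(q,P)}[N(x,y,0,τ₁)] / E_{(q,P)}[τ₁]. -/
/-!
Let `G u = ∑ₙ ℙ(X₁, …, Xₙ ≠ X₀, Xₙ = u)` be the expected number of visits to `u` strictly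
before the first return time `τ`. Summing over `u` gives `E[τ]`, and by the Markov property
the expected number of `x → y` transitions before `τ` is `G x * P x y`. Since `X_τ = X₀`,
counting visits at times `1, …, τ` instead of `0, …, τ - 1` changes nothing, which says that
`G` is invariant under `P`; by irreducibility `G` is then proportional to `π`, namely
`G = E[τ] • π`.

Everything is finite because of the taboo matrices `P.updateCol z 0` (the chain killed when it
enters `z`): `(P.updateCol z 0 ^ n *ᵥ 1) c` is the probability, from `c`, of avoiding `z` at
times `1, …, n`. Irreducibility makes it `< 1` for some `n = K` uniformly in `c`, hence it
decays like `ρ ^ (n / K)`. This gives `E[τ] < ∞` and almost sure return.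
-/

open Finset Matrix MeasureTheory Filter

theorem summable_pow_div {ρ : ℝ} (hρ0 : 0 ≤ ρ) (hρ1 : ρ < 1) {K : ℕ} (hK : K ≠ 0) :
    Summable fun n => ρ ^ (n / K) := by
  have : NeZero K := ⟨hK⟩
  rw [← (Nat.divModEquiv K).symm.summable_iff]
  have hdiv (p : ℕ × Fin K) : (p.1 * K + p.2) / K = p.1 := by
    rw [Nat.add_comm, Nat.add_mul_div_right _ _ (Nat.pos_of_ne_zero hK),
      Nat.div_eq_of_lt p.2.is_lt, Nat.zero_add]
  simpa [Function.comp_def, hdiv] using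
    (summable_geometric_of_lt_one hρ0 hρ1).mul_of_nonneg (.of_finite (f := fun _ : Fin K => 1))
      (fun n => pow_nonneg hρ0 n) (fun _ => zero_le_one)

theorem measureReal_eq_sum_inter {Ω S : Type*} [MeasurableSpace Ω] {μ : Measure Ω}
    [IsFiniteMeasure μ] [Fintype S] [MeasurableSpace S] [MeasurableSingletonClass S]
    {f : Ω → S} (hf : Measurable f) (E : Set Ω) :
    μ.real E = ∑ b, μ.real (E ∩ {ω | f ω = b}) := by
  have := sum_measureReal_preimage_singleton (μ := μ.restrict E) univ
    (fun b _ => hf (measurableSet_singleton b))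
  simp only [coe_univ, Set.preimage_univ, measureReal_restrict_apply_univ] at this
  rw [← this]
  exact sum_congr rfl fun b _ => by
    rw [measureReal_restrict_apply (hf (measurableSet_singleton b)), Set.inter_comm]; rfl

theorem integral_sum_range_indicator {Ω : Type*} [MeasurableSpace Ω] {μ : Measure Ω}
    [IsFiniteMeasure μ] (τ : Ω → ℕ) {B : ℕ → Set Ω}
    (hm : ∀ n, NullMeasurableSet ({ω | n < τ ω} ∩ B n) μ)
    (hs : Summable fun n => μ.real ({ω | n < τ ω} ∩ B n)) :
    ∫ ω, ∑ n ∈ range (τ ω), (B n).indicator 1 ω ∂μ = ∑' n, μ.real ({ω | n < τ ω} ∩ B n) := by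
  have hpt (ω : Ω) : ∑ n ∈ range (τ ω), (B n).indicator (1 : Ω → ℝ) ω =
      ∑' n, ({ω | n < τ ω} ∩ B n).indicator 1 ω := by
    rw [tsum_eq_sum (s := range (τ ω)) fun n hn => by simp [mem_range.not.1 hn]]
    exact sum_congr rfl fun n hn => by simp [Set.inter_indicator_one, mem_range.1 hn]
  simp_rw [hpt]
  rw [integral_tsum (f := fun n => ({ω | n < τ ω} ∩ B n).indicator 1)
    (fun n => aestronglyMeasurable_one.indicator₀ (hm n))]
  · simp [integral_indicator₀ (hm _)]
  · simp only [enorm_indicator_eq_indicator_enorm, Pi.one_apply, enorm_one]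
    simp_rw [lintegral_indicator_const₀ (hm _), one_mul,
      ← fun n => ofReal_measureReal (μ := μ) (s := {ω | n < τ ω} ∩ B n),
      ← ENNReal.ofReal_tsum_of_nonneg (fun n => measureReal_nonneg) hs]
    exact ENNReal.ofReal_ne_top

namespace Matrix

variable {S : Type*} [Fintype S]

theorem mulVec_le_mulVec_of_nonneg {A : Matrix S S ℝ} (hA : ∀ i j, 0 ≤ A i j) {v w : S → ℝ}
    (hvw : v ≤ w) : A *ᵥ v ≤ A *ᵥ w := fun i =>
  sum_le_sum fun j _ => mul_le_mul_of_nonneg_left (hvw j) (hA i j)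

variable [DecidableEq S] {P : Matrix S S ℝ}

section Taboo

variable (hP : P ∈ rowStochastic ℝ S) (z : S)
include hP

theorem updateCol_zero_nonneg (a b : S) : 0 ≤ P.updateCol z 0 a b := by
  rw [updateCol_apply]; split_ifs <;> simp [nonneg_of_mem_rowStochastic hP]

theorem updateCol_zero_le (a b : S) : P.updateCol z 0 a b ≤ P a b := by
  rw [updateCol_apply]; split_ifs <;> simp [nonneg_of_mem_rowStochastic hP]

theorem updateCol_zero_mulVec_one_add (a : S) : (P.updateCol z 0 *ᵥ 1) a + P a z = 1 := by
  rw [← sum_row_of_mem_rowStochastic hP a, ← add_sum_erase _ _ (mem_univ z), add_comm]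
  simp only [mulVec, dotProduct, Pi.one_apply, mul_one, updateCol_apply,
    ← add_sum_erase _ _ (mem_univ z), if_pos, Pi.zero_apply, zero_add]
  exact congrArg _ (sum_congr rfl fun b hb => if_neg (ne_of_mem_erase hb))

theorem pow_updateCol_zero_mulVec_one_nonneg (n : ℕ) (c : S) :
    0 ≤ ((P.updateCol z 0) ^ n *ᵥ 1) c :=
  sum_nonneg fun b _ => by simpa using pow_apply_nonneg (updateCol_zero_nonneg hP z) n c b

theorem antitone_pow_updateCol_zero_mulVec_one (c : S) :
    Antitone fun n => ((P.updateCol z 0) ^ n *ᵥ 1) c := by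
  refine antitone_nat_of_succ_le fun n => ?_
  rw [pow_succ, ← mulVec_mulVec]
  refine mulVec_le_mulVec_of_nonneg (pow_apply_nonneg (updateCol_zero_nonneg hP z) n)
    (fun a => ?_) c
  linarith [updateCol_zero_mulVec_one_add hP z a,
    nonneg_of_mem_rowStochastic hP (i := a) (j := z), show (1 : S → ℝ) a = 1 from rfl]

theorem pow_updateCol_zero_mulVec_one_le_one_sub {t : ℕ} (ht : 1 ≤ t) (c : S) :
    ((P.updateCol z 0) ^ t *ᵥ 1) c ≤ 1 - (P ^ t) c z := by
  induction t, ht using Nat.le_induction generalizing c with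
  | base => simpa [le_sub_iff_add_le] using (updateCol_zero_mulVec_one_add hP z c).le
  | succ t _ ih =>
    calc ((P.updateCol z 0) ^ (t + 1) *ᵥ 1) c
        = ∑ b, P.updateCol z 0 c b * ((P.updateCol z 0) ^ t *ᵥ 1) b := by
          rw [pow_succ', ← mulVec_mulVec]; rfl
      _ ≤ ∑ b, P c b * (1 - (P ^ t) b z) := sum_le_sum fun b _ =>
          mul_le_mul (updateCol_zero_le hP z c b) (ih b)
            (pow_updateCol_zero_mulVec_one_nonneg hP z t b) (nonneg_of_mem_rowStochastic hP)
      _ = 1 - (P ^ (t + 1)) c z := by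
          simp [mul_sub, sum_sub_distrib, sum_row_of_mem_rowStochastic hP, pow_succ', mul_apply]

/-- Splitting `P` into the taboo matrix and its column `z`; the column `z` of `P` is
`1 - P.updateCol z 0 *ᵥ 1`. -/
theorem pow_updateCol_zero_mul_apply (n : ℕ) (c v : S) :
    ((P.updateCol z 0) ^ n * P) c v = ((P.updateCol z 0) ^ (n + 1)) c v +
      if v = z then ((P.updateCol z 0) ^ n *ᵥ 1) c - ((P.updateCol z 0) ^ (n + 1) *ᵥ 1) c
      else 0 := by
  have hPuv (u : S) : P u v = P.updateCol z 0 u v + if v = z then P u z else 0 := by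
    rw [updateCol_apply]; split_ifs with h <;> simp [h]
  have hcol (u : S) : P u z = 1 - (P.updateCol z 0 *ᵥ 1) u := by
    linarith [updateCol_zero_mulVec_one_add hP z u]
  rw [pow_succ, mul_apply, mul_apply]
  simp only [hPuv, mul_add, sum_add_distrib]
  split_ifs
  · simp only [hcol, mul_sub, sum_sub_distrib, ← mulVec_mulVec]
    simp [mulVec, dotProduct]
  · simp

omit z in
theorem pow_updateCol_zero_mulVec_one_le_pow {z : S} {K : ℕ} {ρ : ℝ}
    (hρ : ∀ c, ((P.updateCol z 0) ^ K *ᵥ 1) c ≤ ρ) (j : ℕ) (c : S) :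
    ((P.updateCol z 0) ^ (K * j) *ᵥ 1) c ≤ ρ ^ j := by
  induction j generalizing c with
  | zero => simp
  | succ j ih =>
    have hρ0 : 0 ≤ ρ := (pow_updateCol_zero_mulVec_one_nonneg hP z K c).trans (hρ c)
    calc ((P.updateCol z 0) ^ (K * (j + 1)) *ᵥ 1) c
        = ∑ b, ((P.updateCol z 0) ^ (K * j)) c b * ((P.updateCol z 0) ^ K *ᵥ 1) b := by
          rw [mul_add, mul_one, pow_add, ← mulVec_mulVec]; rfl
      _ ≤ ∑ b, ((P.updateCol z 0) ^ (K * j)) c b * ρ := sum_le_sum fun b _ =>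
          mul_le_mul_of_nonneg_left (hρ b) (pow_apply_nonneg (updateCol_zero_nonneg hP z) _ c b)
      _ = ρ * ((P.updateCol z 0) ^ (K * j) *ᵥ 1) c := by
          simp only [mulVec, dotProduct, Pi.one_apply, mul_one, mul_sum]
          exact sum_congr rfl fun b _ => mul_comm _ _
      _ ≤ ρ ^ (j + 1) := by rw [pow_succ']; exact mul_le_mul_of_nonneg_left (ih c) hρ0

end Taboo

section Irreducible

variable (hP : P ∈ rowStochastic ℝ S) (hirr : ∀ a b, ∃ n, 0 < (P ^ n) a b)
include hP hirr

theorem exists_pow_succ_apply_pos (c z : S) : ∃ s, 0 < (P ^ (s + 1)) c z := by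
  obtain ⟨b, -, hb⟩ : ∃ b ∈ univ, (0 : S → ℝ) b < P c b :=
    exists_lt_of_sum_lt (by simp [sum_row_of_mem_rowStochastic hP c])
  obtain ⟨s, hs⟩ := hirr b z
  refine ⟨s, (mul_pos hb hs).trans_le ?_⟩
  rw [pow_succ', mul_apply]
  exact single_le_sum (f := fun d => P c d * (P ^ s) d z)
    (fun d _ => mul_nonneg (nonneg_of_mem_rowStochastic hP)
      (nonneg_of_mem_rowStochastic (pow_mem hP s))) (mem_univ b)

theorem exists_pow_updateCol_zero_mulVec_one_le (z : S) :
    ∃ K, ∃ ρ < 1, ∀ c, ((P.updateCol z 0) ^ K *ᵥ 1) c ≤ ρ := by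
  choose s hs using fun c => exists_pow_succ_apply_pos hP hirr c z
  set K := univ.sup fun c => s c + 1
  have hlt (c : S) : ((P.updateCol z 0) ^ K *ᵥ 1) c < 1 :=
    calc ((P.updateCol z 0) ^ K *ᵥ 1) c
        ≤ ((P.updateCol z 0) ^ (s c + 1) *ᵥ 1) c :=
          antitone_pow_updateCol_zero_mulVec_one hP z c
            (le_sup (f := fun c => s c + 1) (mem_univ c))
      _ ≤ 1 - (P ^ (s c + 1)) c z := pow_updateCol_zero_mulVec_one_le_one_sub hP z le_add_self c
      _ < 1 := sub_lt_self 1 (hs c)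
  rcases isEmpty_or_nonempty S with hS | hS
  · exact ⟨K, 0, one_pos, isEmptyElim⟩
  obtain ⟨c₀, -, hc₀⟩ := exists_max_image univ (fun c => ((P.updateCol z 0) ^ K *ᵥ 1) c)
    univ_nonempty
  exact ⟨K, _, hlt c₀, fun c => hc₀ c (mem_univ c)⟩

theorem summable_pow_updateCol_zero_mulVec_one (z c : S) :
    Summable fun n => ((P.updateCol z 0) ^ n *ᵥ 1) c := by
  obtain ⟨K, ρ, hρ1, hρ⟩ := exists_pow_updateCol_zero_mulVec_one_le hP hirr z
  have hρ0 : 0 ≤ ρ := (pow_updateCol_zero_mulVec_one_nonneg hP z K c).trans (hρ c)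
  have hK : K ≠ 0 := by
    rintro rfl
    have := hρ c
    simp only [pow_zero, one_mulVec, Pi.one_apply] at this
    linarith
  refine .of_nonneg_of_le (pow_updateCol_zero_mulVec_one_nonneg hP z · c) (fun n => ?_)
    (summable_pow_div hρ0 hρ1 hK)
  calc ((P.updateCol z 0) ^ n *ᵥ 1) c ≤ ((P.updateCol z 0) ^ (K * (n / K)) *ᵥ 1) c :=
        antitone_pow_updateCol_zero_mulVec_one hP z c (Nat.mul_div_le n K)
    _ ≤ ρ ^ (n / K) := pow_updateCol_zero_mulVec_one_le_pow hP hρ _ c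

end Irreducible

section Stationary

theorem vecMul_pow_eq_self {ν : S → ℝ} (hν : ν ᵥ* P = ν) (n : ℕ) : ν ᵥ* P ^ n = ν := by
  induction n with
  | zero => simp
  | succ n ih => rw [pow_succ, ← vecMul_vecMul, ih, hν]

variable (hP0 : ∀ a b, 0 ≤ P a b) (hirr : ∀ a b, ∃ n, 0 < (P ^ n) a b)
include hP0 hirr

theorem eq_zero_of_vecMul_eq_self {ν : S → ℝ} (hν0 : ∀ u, 0 ≤ ν u) (hν : ν ᵥ* P = ν) {u₀ : S}
    (hu₀ : ν u₀ = 0) : ν = 0 := by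
  ext w
  obtain ⟨n, hn⟩ := hirr w u₀
  have hle : ν w * (P ^ n) w u₀ ≤ (ν ᵥ* P ^ n) u₀ :=
    single_le_sum (f := fun u => ν u * (P ^ n) u u₀)
      (fun u _ => mul_nonneg (hν0 u) (pow_apply_nonneg hP0 n u u₀)) (mem_univ w)
  rw [vecMul_pow_eq_self hν, hu₀, ← zero_mul ((P ^ n) w u₀)] at hle
  exact le_antisymm (le_of_mul_le_mul_right hle hn) (hν0 w)

theorem pos_of_vecMul_eq_self {π : S → ℝ} (hπ0 : ∀ u, 0 ≤ π u) (hπ1 : ∑ u, π u = 1)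
    (hπ : π ᵥ* P = π) (u : S) : 0 < π u := by
  refine (hπ0 u).lt_of_ne' fun hu => ?_
  simp [eq_zero_of_vecMul_eq_self hP0 hirr hπ0 hπ hu] at hπ1

/-- `G - c • π` with `c = min (G / π)` is a nonnegative invariant vector vanishing somewhere. -/
theorem eq_sum_smul_of_vecMul_eq_self {π : S → ℝ} (hπ0 : ∀ u, 0 ≤ π u) (hπ1 : ∑ u, π u = 1)
    (hπ : π ᵥ* P = π) {G : S → ℝ} (hG : G ᵥ* P = G) :
    G = (∑ u, G u) • π := by
  have hpos := pos_of_vecMul_eq_self hP0 hirr hπ0 hπ1 hπ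
  obtain ⟨u₀, -, hu₀⟩ := exists_min_image univ (fun u => G u / π u)
    (nonempty_of_sum_ne_zero (hπ1.trans_ne one_ne_zero))
  set c := G u₀ / π u₀
  have hG' : G - c • π = 0 := by
    refine eq_zero_of_vecMul_eq_self hP0 hirr (fun u => ?_) ?_ (u₀ := u₀) ?_
    · simpa [sub_nonneg] using (le_div_iff₀ (hpos u)).1 (hu₀ u (mem_univ u))
    · rw [sub_vecMul, smul_vecMul, hG, hπ]
    · simp [c, div_mul_cancel₀ _ (hpos u₀).ne']
  rw [sub_eq_zero.1 hG']
  simp [← mul_sum, hπ1]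

end Stationary

end Matrix

section Occupation

variable {S : Type*} [Fintype S] [DecidableEq S]

/-- For a chain with initial law `q`, the probability of being at `u` at time `n` without having
revisited the initial state (`IsMarkovChain.measureReal_noReturnUpTo_inter`). -/
def occupationBeforeReturn (q : S → ℝ) (P : Matrix S S ℝ) (n : ℕ) (u : S) : ℝ :=
  ∑ z, q z * ((P.updateCol z 0) ^ n) z u

variable {q : S → ℝ} {P : Matrix S S ℝ}

theorem occupationBeforeReturn_zero (u : S) : occupationBeforeReturn q P 0 u = q u := by
  simp [occupationBeforeReturn, one_apply]

theorem sum_occupationBeforeReturn (n : ℕ) :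
    ∑ u, occupationBeforeReturn q P n u = ∑ z, q z * ((P.updateCol z 0) ^ n *ᵥ 1) z := by
  simp only [occupationBeforeReturn, mulVec, dotProduct, Pi.one_apply, mul_one, mul_sum]
  exact sum_comm

variable (hP : P ∈ rowStochastic ℝ S)
include hP

theorem occupationBeforeReturn_vecMul_add (n : ℕ) (v : S) :
    (occupationBeforeReturn q P n ᵥ* P) v + q v * ((P.updateCol v 0) ^ (n + 1) *ᵥ 1) v =
      occupationBeforeReturn q P (n + 1) v + q v * ((P.updateCol v 0) ^ n *ᵥ 1) v := by
  have h (z : S) : ∑ u, ((P.updateCol z 0) ^ n) z u * P u v = ((P.updateCol z 0) ^ n * P) z v :=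
    mul_apply.symm
  simp only [vecMul, dotProduct, occupationBeforeReturn, sum_mul, mul_assoc]
  rw [sum_comm]
  simp only [← mul_sum, h, pow_updateCol_zero_mul_apply hP, mul_add, sum_add_distrib, mul_ite,
    mul_zero]
  simp only [sum_ite_eq, mem_univ, if_true]
  ring

theorem tsum_occupationBeforeReturn_vecMul (hirr : ∀ a b, ∃ n, 0 < (P ^ n) a b)
    (hG : ∀ u, Summable fun n => occupationBeforeReturn q P n u) :
    (fun u => ∑' n, occupationBeforeReturn q P n u) ᵥ* P =
      fun u => ∑' n, occupationBeforeReturn q P n u := by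
  ext v
  have ha := (summable_pow_updateCol_zero_mulVec_one hP hirr v v).mul_left (q v)
  have hA : Summable fun n => (occupationBeforeReturn q P n ᵥ* P) v :=
    summable_sum fun u _ => (hG u).mul_right _
  have hsum : ∑' n, (occupationBeforeReturn q P n ᵥ* P) v =
      ((fun u => ∑' n, occupationBeforeReturn q P n u) ᵥ* P) v := by
    simp only [vecMul, dotProduct, ← tsum_mul_right]
    exact Summable.tsum_finsetSum fun u _ => (hG u).mul_right _
  have htel := congrArg tsum (funext fun n => occupationBeforeReturn_vecMul_add (q := q) hP n v)
  rw [Summable.tsum_add hA ((summable_nat_add_iff 1).2 ha),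
    Summable.tsum_add ((summable_nat_add_iff 1).2 (hG v)) ha] at htel
  rw [← hsum, (hG v).tsum_eq_zero_add, occupationBeforeReturn_zero]
  linarith [ha.tsum_eq_zero_add, show q v * ((P.updateCol v 0) ^ 0 *ᵥ 1) v = q v by simp]

end Occupation

section MarkovChain

variable {S Ω : Type*}

def trajectory (X : ℕ → Ω → S) (n : ℕ) (ω : Ω) : Fin (n + 1) → S := fun i => X i ω

def DeterminedUpTo (X : ℕ → Ω → S) (n : ℕ) (E : Set Ω) : Prop :=
  ∀ ⦃ω ω'⦄, (∀ i ≤ n, X i ω = X i ω') → ω ∈ E → ω' ∈ E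

variable {X : ℕ → Ω → S}

theorem trajectory_succ (n : ℕ) (ω : Ω) :
    trajectory X (n + 1) ω = Fin.snoc (trajectory X n ω) (X (n + 1) ω) := by
  ext i
  refine Fin.lastCases ?_ (fun j => ?_) i <;> simp [trajectory]

theorem preimage_trajectory_singleton {n : ℕ} (w : Fin (n + 1) → S) {path : ℕ → S}
    (h : ∀ i : Fin (n + 1), path i = w i) :
    trajectory X n ⁻¹' {w} = {ω | ∀ i ≤ n, X i ω = path i} := by
  ext ω
  simp only [Set.mem_preimage, Set.mem_singleton_iff, funext_iff, trajectory, Set.mem_ofPred_eq,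
    ← h]
  exact ⟨fun h i hi => h ⟨i, Nat.lt_succ_of_le hi⟩, fun h i => h i (Nat.le_of_lt_succ i.2)⟩

theorem DeterminedUpTo.preimage_image {n : ℕ} {E : Set Ω} (hE : DeterminedUpTo X n E) :
    trajectory X n ⁻¹' (trajectory X n '' E) = E :=
  subset_antisymm (fun _ ⟨_, hω', heq⟩ => hE (fun i hi => congrFun heq ⟨i, Nat.lt_succ_of_le hi⟩)
    hω') (Set.subset_preimage_image _ _)

variable [MeasurableSpace Ω]

def IsMarkovChain (μ : Measure Ω) (X : ℕ → Ω → S) (q : S → ℝ) (P : Matrix S S ℝ) : Prop :=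
  ∀ (n : ℕ) (path : ℕ → S),
    μ.real {ω | ∀ i ≤ n, X i ω = path i} = q (path 0) * ∏ i ∈ range n, P (path i) (path (i + 1))

variable {μ : Measure Ω} {q : S → ℝ} {P : Matrix S S ℝ}

theorem IsMarkovChain.measureReal_zero (hMC : IsMarkovChain μ X q P) (z : S) :
    μ.real {ω | X 0 ω = z} = q z := by
  simpa using hMC 0 fun _ => z

theorem IsMarkovChain.measureReal_trajectory_snoc (hMC : IsMarkovChain μ X q P) {n : ℕ}
    (w : Fin (n + 1) → S) (v : S) :
    μ.real (trajectory X (n + 1) ⁻¹' {Fin.snoc w v}) =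
      μ.real (trajectory X n ⁻¹' {w}) * P (w (Fin.last n)) v := by
  set path : ℕ → S := fun i => if h : i < n + 2 then (Fin.snoc w v : Fin (n + 2) → S) ⟨i, h⟩ else v
  have hsnoc (i : Fin (n + 2)) : path i = (Fin.snoc w v : Fin (n + 2) → S) i := by simp [path]
  have hw (i : Fin (n + 1)) : path i = w i := by simpa using hsnoc i.castSucc
  rw [preimage_trajectory_singleton _ hsnoc, preimage_trajectory_singleton _ hw, hMC, hMC,
    prod_range_succ, mul_assoc]
  congr
  · exact hw (Fin.last n)
  · exact (hsnoc (Fin.last (n + 1))).trans (Fin.snoc_last (α := fun _ => S) v w)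

variable [MeasurableSpace S] (hX : ∀ i, Measurable (X i))
include hX

theorem measurable_trajectory (n : ℕ) : Measurable (trajectory X n) :=
  measurable_pi_lambda _ fun i => hX i

theorem DeterminedUpTo.measurableSet [Finite S] [MeasurableSingletonClass S] {n : ℕ} {E : Set Ω}
    (hE : DeterminedUpTo X n E) : MeasurableSet E :=
  hE.preimage_image ▸ measurable_trajectory hX n (Set.toFinite _).measurableSet

variable [Fintype S] [MeasurableSingletonClass S] [IsFiniteMeasure μ]
  (hMC : IsMarkovChain μ X q P)
include hMC

/-- The Markov property at time `n`: decompose `E ∩ {Xₙ = u}` into cylinders of length `n + 1`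
and extend each by one step. -/
theorem IsMarkovChain.measureReal_inter_eq_mul {n : ℕ} {E : Set Ω} (hE : DeterminedUpTo X n E)
    (u v : S) :
    μ.real (E ∩ {ω | X n ω = u ∧ X (n + 1) ω = v}) = μ.real (E ∩ {ω | X n ω = u}) * P u v := by
  classical
  set A : Finset (Fin (n + 1) → S) :=
    univ.filter fun w => w ∈ trajectory X n '' E ∧ w (Fin.last n) = u
  have hA : E ∩ {ω | X n ω = u} = trajectory X n ⁻¹' A := by
    rw [← hE.preimage_image]
    ext ω
    simp [A, trajectory]
  have hA' : E ∩ {ω | X n ω = u ∧ X (n + 1) ω = v} =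
      trajectory X (n + 1) ⁻¹' ↑(A.image fun w => (Fin.snoc w v : Fin (n + 2) → S)) := by
    rw [← hE.preimage_image]
    ext ω
    simp only [A, Set.mem_inter_iff, Set.mem_preimage, Set.mem_ofPred_eq, coe_image, coe_filter,
      mem_univ, true_and, Set.mem_image, trajectory_succ, Fin.snoc_inj]
    constructor
    · rintro ⟨hω, hu, hv⟩
      exact ⟨_, ⟨hω, hu⟩, rfl, hv.symm⟩
    · rintro ⟨_, ⟨hω, hu⟩, rfl, rfl⟩
      exact ⟨hω, hu, rfl⟩
  have hmeas (m : ℕ) (w : Fin (m + 1) → S) : MeasurableSet (trajectory X m ⁻¹' {w}) :=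
    measurable_trajectory hX m (measurableSet_singleton w)
  rw [hA, hA', ← sum_measureReal_preimage_singleton _ fun w _ => hmeas _ w,
    ← sum_measureReal_preimage_singleton _ fun w _ => hmeas _ w,
    sum_image fun w _ w' _ h => (Fin.snoc_inj.1 h).1, sum_mul]
  refine sum_congr rfl fun w hw => ?_
  rw [hMC.measureReal_trajectory_snoc, (mem_filter.1 hw).2.2]

theorem IsMarkovChain.measureReal_inter_succ {n : ℕ} {E : Set Ω} (hE : DeterminedUpTo X n E)
    (v : S) :
    μ.real (E ∩ {ω | X (n + 1) ω = v}) = ∑ u, μ.real (E ∩ {ω | X n ω = u}) * P u v := by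
  rw [measureReal_eq_sum_inter (hX n)]
  refine sum_congr rfl fun u _ => ?_
  rw [← hMC.measureReal_inter_eq_mul hX hE, Set.inter_assoc]
  congr 2
  ext ω
  exact and_comm

end MarkovChain

section ReturnTime

variable {S Ω : Type*} {X : ℕ → Ω → S}

def noReturnUpTo (X : ℕ → Ω → S) (n : ℕ) : Set Ω := {ω | ∀ i, 0 < i → i ≤ n → X i ω ≠ X 0 ω}

theorem noReturnUpTo_zero : noReturnUpTo X 0 = Set.univ := by
  ext ω
  simp only [noReturnUpTo, Set.mem_ofPred_eq, Set.mem_univ, iff_true]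
  omega

theorem noReturnUpTo_succ (n : ℕ) :
    noReturnUpTo X (n + 1) = noReturnUpTo X n ∩ {ω | X (n + 1) ω ≠ X 0 ω} := by
  ext ω
  simp only [noReturnUpTo, Set.mem_ofPred_eq, Set.mem_inter_iff]
  exact ⟨fun h => ⟨fun i hi hin => h i hi (by omega), h _ (by omega) le_rfl⟩,
    fun ⟨h, hn⟩ i hi hin => (Nat.le_succ_iff.1 hin).elim (h i hi) (· ▸ hn)⟩

theorem determinedUpTo_noReturnUpTo (n : ℕ) : DeterminedUpTo X n (noReturnUpTo X n) :=
  fun ω ω' h hω i hi hin => by rw [← h i hin, ← h 0 (Nat.zero_le n)]; exact hω i hi hin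

/-- On paths that never return, `τ = sInf ∅ = 0`, so this needs the return hypothesis `hω`. -/
theorem lt_iff_mem_noReturnUpTo {τ : Ω → ℕ} (hτ : ∀ ω, τ ω = sInf {n | 0 < n ∧ X n ω = X 0 ω})
    {ω : Ω} (hω : ∃ m, 0 < m ∧ X m ω = X 0 ω) (n : ℕ) : n < τ ω ↔ ω ∈ noReturnUpTo X n := by
  rw [hτ]
  refine ⟨fun hn i hi hin heq => ?_, fun h => ?_⟩
  · exact absurd (Nat.sInf_le (show i ∈ {n | 0 < n ∧ X n ω = X 0 ω} from ⟨hi, heq⟩)) (by omega)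
  · by_contra hle
    obtain ⟨h1, h2⟩ := Nat.sInf_mem hω
    exact h _ h1 (not_lt.1 hle) h2

variable [Fintype S] [DecidableEq S] [MeasurableSpace S] [MeasurableSingletonClass S]
  [MeasurableSpace Ω] {μ : Measure Ω} [IsFiniteMeasure μ] {q : S → ℝ} {P : Matrix S S ℝ}
  (hMC : IsMarkovChain μ X q P) (hX : ∀ i, Measurable (X i))
include hMC hX

theorem IsMarkovChain.measureReal_noReturnUpTo_inter_inter (n : ℕ) (u z : S) :
    μ.real (noReturnUpTo X n ∩ {ω | X n ω = u} ∩ {ω | X 0 ω = z}) =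
      q z * ((P.updateCol z 0) ^ n) z u := by
  induction n generalizing u with
  | zero =>
    rw [noReturnUpTo_zero, Set.univ_inter, pow_zero, one_apply]
    split_ifs with h
    · rw [h, Set.inter_self, hMC.measureReal_zero, mul_one]
    · rw [mul_zero, ← measureReal_empty (μ := μ)]
      congr 1
      ext ω
      simp only [Set.mem_inter_iff, Set.mem_ofPred_eq, Set.mem_empty_iff_false, iff_false]
      exact fun ⟨hu, hz⟩ => h (hz.symm.trans hu)
  | succ n ih =>
    by_cases hu : u = z
    · subst hu
      rw [pow_succ, mul_apply]
      simp only [updateCol_apply, if_true, Pi.zero_apply, mul_zero, sum_const_zero]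
      rw [← measureReal_empty (μ := μ)]
      congr 1
      ext ω
      simp only [noReturnUpTo_succ, Set.mem_inter_iff, Set.mem_ofPred_eq, Set.mem_empty_iff_false,
        iff_false]
      exact fun ⟨⟨⟨_, hne⟩, hu⟩, hz⟩ => hne (hu.trans hz.symm)
    have hE : DeterminedUpTo X n (noReturnUpTo X n ∩ {ω | X 0 ω = z}) := fun ω ω' h hω =>
      ⟨determinedUpTo_noReturnUpTo n h hω.1, (h 0 (Nat.zero_le n)).symm.trans hω.2⟩
    have hset : noReturnUpTo X (n + 1) ∩ {ω | X (n + 1) ω = u} ∩ {ω | X 0 ω = z} =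
        noReturnUpTo X n ∩ {ω | X 0 ω = z} ∩ {ω | X (n + 1) ω = u} := by
      ext ω
      simp only [noReturnUpTo_succ, Set.mem_inter_iff, Set.mem_ofPred_eq]
      constructor
      · exact fun ⟨⟨⟨h, _⟩, hu⟩, hz⟩ => ⟨⟨h, hz⟩, hu⟩
      · exact fun ⟨⟨h, hz⟩, hu'⟩ => ⟨⟨⟨h, by rw [hu', hz]; exact hu⟩, hu'⟩, hz⟩
    rw [hset, hMC.measureReal_inter_succ hX hE, pow_succ, mul_apply, mul_sum]
    refine sum_congr rfl fun b _ => ?_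
    rw [Set.inter_right_comm, ih, updateCol_apply, if_neg hu, mul_assoc]

theorem IsMarkovChain.measureReal_noReturnUpTo_inter (n : ℕ) (u : S) :
    μ.real (noReturnUpTo X n ∩ {ω | X n ω = u}) = occupationBeforeReturn q P n u := by
  rw [measureReal_eq_sum_inter (hX 0)]
  exact sum_congr rfl fun z _ => hMC.measureReal_noReturnUpTo_inter_inter hX n u z

theorem IsMarkovChain.measureReal_noReturnUpTo (n : ℕ) :
    μ.real (noReturnUpTo X n) = ∑ u, occupationBeforeReturn q P n u := by
  rw [measureReal_eq_sum_inter (hX n)]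
  exact sum_congr rfl fun u _ => hMC.measureReal_noReturnUpTo_inter hX n u

variable (hP : P ∈ rowStochastic ℝ S) (hirr : ∀ a b, ∃ n, 0 < (P ^ n) a b)
include hP hirr

theorem IsMarkovChain.summable_measureReal_noReturnUpTo :
    Summable fun n => μ.real (noReturnUpTo X n) := by
  simp_rw [hMC.measureReal_noReturnUpTo hX, sum_occupationBeforeReturn]
  exact summable_sum fun z _ => (summable_pow_updateCol_zero_mulVec_one hP hirr z z).mul_left (q z)

theorem IsMarkovChain.summable_occupationBeforeReturn (u : S) :
    Summable fun n => occupationBeforeReturn q P n u := by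
  refine .of_nonneg_of_le (fun n => ?_) (fun n => ?_)
    (hMC.summable_measureReal_noReturnUpTo hX hP hirr) <;>
    rw [← hMC.measureReal_noReturnUpTo_inter hX]
  exacts [measureReal_nonneg, measureReal_mono Set.inter_subset_left]

theorem IsMarkovChain.ae_exists_return : ∀ᵐ ω ∂μ, ∃ m, 0 < m ∧ X m ω = X 0 ω := by
  have hsub (n : ℕ) : {ω | ¬ ∃ m, 0 < m ∧ X m ω = X 0 ω} ⊆ noReturnUpTo X n :=
    fun ω hω i hi _ heq => hω ⟨i, hi, heq⟩
  rw [ae_iff, ← measureReal_eq_zero_iff]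
  exact le_antisymm (ge_of_tendsto'
    (hMC.summable_measureReal_noReturnUpTo hX hP hirr).tendsto_atTop_zero
    fun n => measureReal_mono (hsub n)) measureReal_nonneg

variable {τ : Ω → ℕ} (hτ : ∀ ω, τ ω = sInf {n | 0 < n ∧ X n ω = X 0 ω})
include hτ

theorem IsMarkovChain.integral_sum_range_indicator_eq {B : ℕ → Set Ω}
    (hB : ∀ n, DeterminedUpTo X (n + 1) (B n)) :
    ∫ ω, ∑ n ∈ range (τ ω), (B n).indicator 1 ω ∂μ = ∑' n, μ.real (noReturnUpTo X n ∩ B n) := by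
  have hlt (n : ℕ) : ({ω | n < τ ω} : Set Ω) =ᵐ[μ] noReturnUpTo X n :=
    (hMC.ae_exists_return hX hP hirr).mono fun ω hω =>
      propext (lt_iff_mem_noReturnUpTo hτ hω n)
  have hae (n : ℕ) := (hlt n).inter (EventuallyEq.refl _ (B n))
  have hmeas (n : ℕ) : MeasurableSet (noReturnUpTo X n ∩ B n) :=
    ((determinedUpTo_noReturnUpTo n).measurableSet hX).inter ((hB n).measurableSet hX)
  have hsum : Summable fun n => μ.real (noReturnUpTo X n ∩ B n) :=
    .of_nonneg_of_le (fun _ => measureReal_nonneg) (fun n => measureReal_mono Set.inter_subset_left)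
      (hMC.summable_measureReal_noReturnUpTo hX hP hirr)
  simp_rw [← measureReal_congr (hae _)] at hsum ⊢
  exact integral_sum_range_indicator τ
    (fun n => (hmeas n).nullMeasurableSet.congr (hae n).symm) hsum

theorem IsMarkovChain.integral_firstReturn_eq_tsum :
    ∫ ω, (τ ω : ℝ) ∂μ = ∑' n, μ.real (noReturnUpTo X n) := by
  simpa using hMC.integral_sum_range_indicator_eq hX hP hirr hτ (B := fun _ => Set.univ)
    fun _ _ _ _ _ => trivial

theorem IsMarkovChain.one_le_integral_firstReturn [IsProbabilityMeasure μ] :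
    1 ≤ ∫ ω, (τ ω : ℝ) ∂μ := by
  rw [hMC.integral_firstReturn_eq_tsum hX hP hirr hτ]
  refine le_of_eq_of_le ?_ ((hMC.summable_measureReal_noReturnUpTo hX hP hirr).le_tsum 0
    fun n _ => measureReal_nonneg)
  simp [noReturnUpTo_zero]

theorem IsMarkovChain.integral_transitions (x y : S) :
    ∫ ω, (∑ s ∈ range (τ ω), if X s ω = x ∧ X (s + 1) ω = y then (1 : ℝ) else 0) ∂μ =
      (∑' n, occupationBeforeReturn q P n x) * P x y := by
  have hB (n : ℕ) : DeterminedUpTo X (n + 1) {ω | X n ω = x ∧ X (n + 1) ω = y} :=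
    fun ω ω' h hω => by rwa [Set.mem_ofPred_eq, ← h n n.le_succ, ← h (n + 1) le_rfl]
  have := hMC.integral_sum_range_indicator_eq hX hP hirr hτ hB
  simp only [Set.indicator_apply, Set.mem_ofPred_eq, Pi.one_apply] at this
  rw [this, ← tsum_mul_right]
  refine tsum_congr fun n => ?_
  rw [hMC.measureReal_inter_eq_mul hX (determinedUpTo_noReturnUpTo n),
    hMC.measureReal_noReturnUpTo_inter hX]

end ReturnTime

theorem stmt_1_general
    {S : Type*} [Fintype S] [DecidableEq S] [MeasurableSpace S] [MeasurableSingletonClass S]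
    {Ω : Type*} [MeasurableSpace Ω] (μ : Measure Ω) [IsProbabilityMeasure μ]
    (X : ℕ → Ω → S) (hX : ∀ i, Measurable (X i))
    (q : S → ℝ) (P : S → S → ℝ) (pi : S → ℝ)
    (hP0 : ∀ x y, 0 ≤ P x y) (hP1 : ∀ x, ∑ y, P x y = 1)
    (hirr : ∀ x y : S, ∃ n : ℕ, 0 < ((Matrix.of P) ^ n) x y)
    (hpi0 : ∀ x, 0 ≤ pi x) (hpi1 : ∑ x, pi x = 1)
    (hpiP : ∀ y, ∑ x, pi x * P x y = pi y)
    (hMC : ∀ (n : ℕ) (path : ℕ → S),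
      (μ {ω | ∀ i ≤ n, X i ω = path i}).toReal
        = q (path 0) * ∏ i ∈ Finset.range n, P (path i) (path (i + 1)))
    (τ : Ω → ℕ) (hτ : ∀ ω, τ ω = sInf {n | 0 < n ∧ X n ω = X 0 ω})
    (x y : S) :
    pi x * P x y
      = (∫ ω, (∑ s ∈ Finset.range (τ ω),
            if X s ω = x ∧ X (s + 1) ω = y then (1 : ℝ) else 0) ∂μ)
        / (∫ ω, (τ ω : ℝ) ∂μ) := by
  have hP : of P ∈ rowStochastic ℝ S := mem_rowStochastic_iff_sum.2 ⟨hP0, hP1⟩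
  have hchain : IsMarkovChain μ X q (of P) := hMC
  have hsum := hchain.summable_occupationBeforeReturn hX hP hirr
  set G := fun u => ∑' n, occupationBeforeReturn q (of P) n u
  have hG : G = (∑ u, G u) • pi := eq_sum_smul_of_vecMul_eq_self hP0 hirr hpi0 hpi1
    (funext hpiP) (tsum_occupationBeforeReturn_vecMul hP hirr hsum)
  have hτ_int : ∫ ω, (τ ω : ℝ) ∂μ = ∑ u, G u := by
    simp_rw [hchain.integral_firstReturn_eq_tsum hX hP hirr hτ, hchain.measureReal_noReturnUpTo hX]
    exact Summable.tsum_finsetSum fun u _ => hsum u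
  have hτ_pos := hchain.one_le_integral_firstReturn hX hP hirr hτ
  rw [hchain.integral_transitions hX hP hirr hτ, hτ_int, eq_div_iff (by linarith),
    show ∑' n, occupationBeforeReturn q (of P) n x = (∑ u, G u) * pi x from congrFun hG x,
    of_apply]
  ring

/-- For an irreducible finite-state Markov chain, writing `τ₁` for the first return
time to the initial state and `N(x,y,0,τ₁)` for the number of transitions from `x`
to `y` before `τ₁`, we have `π x * P x y = E[N(x,y,0,τ₁)] / E[τ₁]`. -/
theorem stmt_1
    {S : Type*} [Fintype S] [DecidableEq S] [MeasurableSpace S] [MeasurableSingletonClass S]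
    {Ω : Type*} [MeasurableSpace Ω] (μ : Measure Ω) [IsProbabilityMeasure μ]
    (X : ℕ → Ω → S) (hX : ∀ i, Measurable (X i))
    (q : S → ℝ) (P : S → S → ℝ) (pi : S → ℝ)
    (hq0 : ∀ x, 0 ≤ q x) (hq1 : ∑ x, q x = 1)
    (hP0 : ∀ x y, 0 ≤ P x y) (hP1 : ∀ x, ∑ y, P x y = 1)
    (hirr : ∀ x y : S, ∃ n : ℕ, 0 < ((Matrix.of P) ^ n) x y)
    (hpi0 : ∀ x, 0 ≤ pi x) (hpi1 : ∑ x, pi x = 1)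
    (hpiP : ∀ y, ∑ x, pi x * P x y = pi y)
    (hMC : ∀ (n : ℕ) (path : ℕ → S),
      (μ {ω | ∀ i ≤ n, X i ω = path i}).toReal
        = q (path 0) * ∏ i ∈ Finset.range n, P (path i) (path (i + 1)))
    (τ : Ω → ℕ) (hτ : ∀ ω, τ ω = sInf {n | 0 < n ∧ X n ω = X 0 ω})
    (x y : S) :
    pi x * P x y
      = (∫ ω, (∑ s ∈ Finset.range (τ ω),
            if X s ω = x ∧ X (s + 1) ω = y then (1 : ℝ) else 0) ∂μ)
        / (∫ ω, (τ ω : ℝ) ∂μ) :=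
  stmt_1_general μ X hX q P pi hP0 hP1 hirr hpi0 hpi1 hpiP hMC τ hτ x y
end

section
/- Let P be a positive stochastic matrix on a finite set S, f : S → ℝ, and for θ ∈ ℝ define the tilted matrix P̃_θ(x,y) = P(x,y)e^{θ f(y)} with positive right Perron–Frobenius eigenvector v_θ. Then for all θ ∈ ℝ and all x, y ∈ S, v_θ(y)/v_θ(x) ≤ max_{x',y',z} P(y',z)/P(x',z). -/
/-- For a positive stochastic matrix `P` and the tilted matrices
`P̃_θ (x,y) = P x y * exp (θ * f y)` with positive right Perron–Frobenius
eigenvectors `v θ`, the ratios of entries of `v θ` are uniformly bounded by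
`max_{x,y,z} P y z / P x z`. -/
theorem stmt_5
    {S : Type*} [Fintype S] [Nonempty S]
    (P : S → S → ℝ) (f : S → ℝ)
    (hPpos : ∀ x y, 0 < P x y) (hP1 : ∀ x, ∑ y, P x y = 1)
    (ρ : ℝ → ℝ) (v : ℝ → S → ℝ)
    (hρ : ∀ θ, 0 < ρ θ) (hv : ∀ θ x, 0 < v θ x)
    (heig : ∀ θ x, ∑ y, P x y * Real.exp (θ * f y) * v θ y = ρ θ * v θ x) :
    ∀ (θ : ℝ) (x y : S),
      v θ y / v θ x
        ≤ Finset.univ.sup' Finset.univ_nonempty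
            (fun t : S × S × S => P t.2.1 t.2.2 / P t.1 t.2.2) := by
  intro θ x y
  set M := Finset.univ.sup' Finset.univ_nonempty
      (fun t : S × S × S => P t.2.1 t.2.2 / P t.1 t.2.2) with hM
  have hle : ∀ z, P y z ≤ M * P x z := by
    intro z
    have h : P y z / P x z ≤ M :=
      Finset.le_sup' (fun t : S × S × S => P t.2.1 t.2.2 / P t.1 t.2.2)
        (Finset.mem_univ (x, y, z))
    calc P y z = (P y z / P x z) * P x z := by
          field_simp [(hPpos x z).ne']
      _ ≤ M * P x z := by
          exact mul_le_mul_of_nonneg_right h (hPpos x z).le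
  have key : ρ θ * v θ y ≤ M * (ρ θ * v θ x) := by
    rw [← heig θ y, ← heig θ x, Finset.mul_sum]
    apply Finset.sum_le_sum
    intro z _
    have := mul_le_mul_of_nonneg_right (hle z)
      (mul_pos (Real.exp_pos (θ * f z)) (hv θ z)).le
    calc P y z * Real.exp (θ * f z) * v θ z
        = P y z * (Real.exp (θ * f z) * v θ z) := by ring
      _ ≤ M * P x z * (Real.exp (θ * f z) * v θ z) := this
      _ = M * (P x z * Real.exp (θ * f z) * v θ z) := by ring
  have hvy : v θ y ≤ M * v θ x := by
    have hρ' := hρ θ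
    nlinarith [hv θ x, hv θ y]
  rw [div_le_iff₀ (hv θ x)]
  exact hvy
end

section
/- Let P be an irreducible stochastic matrix on a finite set S, f : S → ℝ, P̃_θ(x,y) = P(x,y)e^{θ f(y)} the tilted matrix with Perron–Frobenius eigenvalue ρ(θ), and let A(θ) = log ρ(θ). Let A_n(θ) = (1/n) log E_{x₀}[exp(θ(f(X₁)+⋯+f(X_n)))] be the scaled log-moment-generating function of the chain started at an arbitrary state x₀. Then |A_n(θ) − A(θ)| ≤ (log C)/n for all θ ∈ ℝ and n ≥ 1, where C = sup_{θ,x,y} v_θ(y)/v_θ(x) is the uniform bound on ratios of entries of the right Perron–Frobenius eigenvectors, assumed finite. -/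
open MeasureTheory

namespace Stmt6Aux

variable {S : Type*} [Fintype S] [DecidableEq S]

/-- Extend a path `Fin (n+1) → S` to `ℕ → S`. -/
def ext (n : ℕ) (p : Fin (n + 1) → S) : ℕ → S :=
  fun i => if h : i < n + 1 then p ⟨i, h⟩ else p 0

lemma ext_lt (n : ℕ) (p : Fin (n + 1) → S) (i : ℕ) (h : i < n + 1) :
    ext n p i = p ⟨i, h⟩ := dif_pos h

lemma ext_cons_zero (n : ℕ) (a : S) (q : Fin (n + 1) → S) :
    ext (n + 1) (Fin.cons a q) 0 = a := by
  rw [ext_lt _ _ 0 (by omega)]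
  simp

lemma ext_cons_succ (n : ℕ) (a : S) (q : Fin (n + 1) → S) (i : ℕ) (hi : i ≤ n) :
    ext (n + 1) (Fin.cons a q) (i + 1) = ext n q i := by
  rw [ext_lt _ _ (i + 1) (by omega), ext_lt _ _ i (by omega)]
  exact @Fin.cons_succ (n + 1) (fun _ => S) a q ⟨i, by omega⟩

/-- Iterated application of the kernel `Q`. -/
def W (Q : S → S → ℝ) : ℕ → (S → ℝ) → S → ℝ
  | 0 => fun w x => w x
  | n + 1 => fun w x => ∑ y, Q x y * W Q n w y

@[simp] lemma W_zero (Q : S → S → ℝ) (w : S → ℝ) (x : S) : W Q 0 w x = w x := rfl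

lemma W_succ (Q : S → S → ℝ) (n : ℕ) (w : S → ℝ) (x : S) :
    W Q (n + 1) w x = ∑ y, Q x y * W Q n w y := rfl

lemma W_mono {Q : S → S → ℝ} (hQ : ∀ x y, 0 ≤ Q x y) {w₁ w₂ : S → ℝ}
    (h : ∀ y, w₁ y ≤ w₂ y) : ∀ n x, W Q n w₁ x ≤ W Q n w₂ x := by
  intro n
  induction n with
  | zero => intro x; exact h x
  | succ n ih =>
    intro x
    exact Finset.sum_le_sum fun y _ => mul_le_mul_of_nonneg_left (ih y) (hQ x y)

lemma W_smul (Q : S → S → ℝ) (c : ℝ) (w : S → ℝ) :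
    ∀ n x, W Q n (fun y => c * w y) x = c * W Q n w x := by
  intro n
  induction n with
  | zero => intro x; rfl
  | succ n ih =>
    intro x
    rw [W_succ, W_succ, Finset.mul_sum]
    exact Finset.sum_congr rfl fun y _ => by rw [ih]; ring

lemma pathSum (Q : S → S → ℝ) (w : S → ℝ) :
    ∀ (n : ℕ) (x : S),
      (∑ p : Fin (n + 1) → S,
        (if ext n p 0 = x then (1 : ℝ) else 0) *
          ((∏ i ∈ Finset.range n, Q (ext n p i) (ext n p (i + 1))) * w (ext n p n)))
      = W Q n w x := by
  intro n
  induction n with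
  | zero =>
    intro x
    rw [← Fintype.sum_equiv (Equiv.funUnique (Fin 1) S).symm
      (fun y => (if y = x then (1 : ℝ) else 0) * (1 * w y)) _ (fun y => by
        simp [ext_lt 0 _ 0 (by omega), Equiv.funUnique])]
    simp [ite_mul, Finset.sum_ite_eq']
  | succ n ih =>
    intro x
    rw [← Fintype.sum_equiv (Fin.consEquiv (fun _ : Fin (n + 2) => S))
      (fun aq : S × (Fin (n + 1) → S) =>
        (if ext (n + 1) (Fin.cons aq.1 aq.2) 0 = x then (1 : ℝ) else 0) *
          ((∏ i ∈ Finset.range (n + 1),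
              Q (ext (n + 1) (Fin.cons aq.1 aq.2) i) (ext (n + 1) (Fin.cons aq.1 aq.2) (i + 1))) *
            w (ext (n + 1) (Fin.cons aq.1 aq.2) (n + 1)))) _ (fun aq => rfl)]
    rw [Fintype.sum_prod_type]
    rw [Finset.sum_eq_single x
      (fun b _ hb => Finset.sum_eq_zero fun q _ => by
        rw [ext_cons_zero, if_neg hb, zero_mul])
      (fun hx => absurd (Finset.mem_univ x) hx)]
    have key : ∀ q : Fin (n + 1) → S,
        (∏ i ∈ Finset.range (n + 1),
          Q (ext (n + 1) (Fin.cons x q) i) (ext (n + 1) (Fin.cons x q) (i + 1)))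
        = Q x (ext n q 0) * ∏ i ∈ Finset.range n, Q (ext n q i) (ext n q (i + 1)) := by
      intro q
      rw [Finset.prod_range_succ', ext_cons_zero, ext_cons_succ n x q 0 (by omega), mul_comm]
      congr 1
      refine Finset.prod_congr rfl fun i hi => ?_
      have hi' : i < n := Finset.mem_range.1 hi
      rw [ext_cons_succ n x q i (by omega), ext_cons_succ n x q (i + 1) (by omega)]
    calc
      (∑ q : Fin (n + 1) → S,
          (if ext (n + 1) (Fin.cons x q) 0 = x then (1 : ℝ) else 0) *
            ((∏ i ∈ Finset.range (n + 1),
                Q (ext (n + 1) (Fin.cons x q) i) (ext (n + 1) (Fin.cons x q) (i + 1))) *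
              w (ext (n + 1) (Fin.cons x q) (n + 1))))
        = ∑ q : Fin (n + 1) → S,
            Q x (ext n q 0) *
              ((∏ i ∈ Finset.range n, Q (ext n q i) (ext n q (i + 1))) * w (ext n q n)) := by
          refine Finset.sum_congr rfl fun q _ => ?_
          rw [ext_cons_zero, if_pos rfl, one_mul, key q,
            ext_cons_succ n x q n le_rfl]
          ring
      _ = ∑ q : Fin (n + 1) → S, ∑ y : S,
            Q x y * ((if ext n q 0 = y then (1 : ℝ) else 0) *
              ((∏ i ∈ Finset.range n, Q (ext n q i) (ext n q (i + 1))) * w (ext n q n))) := by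
          refine Finset.sum_congr rfl fun q _ => ?_
          simp [mul_ite, ite_mul, Finset.sum_ite_eq]
      _ = ∑ y : S, Q x y * ∑ q : Fin (n + 1) → S,
            ((if ext n q 0 = y then (1 : ℝ) else 0) *
              ((∏ i ∈ Finset.range n, Q (ext n q i) (ext n q (i + 1))) * w (ext n q n))) := by
          rw [Finset.sum_comm]
          exact Finset.sum_congr rfl fun y _ => by rw [Finset.mul_sum]
      _ = ∑ y : S, Q x y * W Q n w y := by
          exact Finset.sum_congr rfl fun y _ => by rw [ih y]
      _ = W Q (n + 1) w x := (W_succ Q n w x).symm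

end Stmt6Aux

open Stmt6Aux

/-- The scaled log-moment-generating function `A_n θ` of an irreducible finite
Markov chain started at an arbitrary state satisfies
`|A_n θ - A θ| ≤ log C / n` where `A θ = log ρ θ` is the log-Perron–Frobenius
eigenvalue of the tilted matrix and `C` uniformly bounds the ratios of entries
of right Perron–Frobenius eigenvectors. -/
theorem stmt_6
    {S : Type*} [Fintype S] [DecidableEq S] [MeasurableSpace S] [MeasurableSingletonClass S]
    {Ω : Type*} [MeasurableSpace Ω] (μ : Measure Ω) [IsProbabilityMeasure μ]
    (X : ℕ → Ω → S) (hX : ∀ i, Measurable (X i))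
    (P : S → S → ℝ) (f : S → ℝ) (x₀ : S)
    (hP0 : ∀ x y, 0 ≤ P x y) (hP1 : ∀ x, ∑ y, P x y = 1)
    (hirr : ∀ x y : S, ∃ n : ℕ, 0 < ((Matrix.of P) ^ n) x y)
    (hMC : ∀ (n : ℕ) (path : ℕ → S),
      (μ {ω | ∀ i ≤ n, X i ω = path i}).toReal
        = (if path 0 = x₀ then (1 : ℝ) else 0)
            * ∏ i ∈ Finset.range n, P (path i) (path (i + 1)))
    (ρ : ℝ → ℝ) (v : ℝ → S → ℝ)
    (hρ : ∀ θ, 0 < ρ θ) (hv : ∀ θ x, 0 < v θ x)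
    (heig : ∀ θ x, ∑ y, P x y * Real.exp (θ * f y) * v θ y = ρ θ * v θ x)
    (C : ℝ) (hC : ∀ (θ : ℝ) (x y : S), v θ y ≤ C * v θ x) :
    ∀ (θ : ℝ) (n : ℕ), 1 ≤ n →
      |(1 / (n : ℝ)) * Real.log
            (∫ ω, Real.exp (θ * ∑ i ∈ Finset.range n, f (X (i + 1) ω)) ∂μ)
          - Real.log (ρ θ)|
        ≤ Real.log C / n := by
  intro θ n hn
  set Q : S → S → ℝ := fun x y => P x y * Real.exp (θ * f y) with hQdef
  -- measurability of cylinder sets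
  have hcyl : ∀ p : Fin (n + 1) → S,
      MeasurableSet {ω | ∀ i ≤ n, X i ω = ext n p i} := by
    intro p
    have : {ω | ∀ i ≤ n, X i ω = ext n p i}
        = ⋂ i ∈ Finset.range (n + 1), (X i) ⁻¹' {ext n p i} := by
      ext ω; simp [Nat.lt_succ_iff]
    rw [this]
    exact Finset.measurableSet_biInter _ fun i _ => (hX i) (measurableSet_singleton _)
  -- pointwise decomposition over cylinders
  have hpoint : ∀ ω, Real.exp (θ * ∑ i ∈ Finset.range n, f (X (i + 1) ω))
      = ∑ p : Fin (n + 1) → S,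
          Set.indicator {ω' | ∀ i ≤ n, X i ω' = ext n p i}
            (fun _ => Real.exp (θ * ∑ i ∈ Finset.range n, f (ext n p (i + 1)))) ω := by
    intro ω
    rw [Finset.sum_eq_single_of_mem (fun i : Fin (n + 1) => X i.val ω) (Finset.mem_univ _)
      (fun p _ hp => by
        apply Set.indicator_of_notMem
        intro hmem
        apply hp
        funext j
        have h1 := hmem j.val (Nat.lt_succ_iff.1 j.isLt)
        rw [ext_lt n p j.val j.isLt] at h1
        simpa using h1.symm)]
    have hmem : ω ∈ {ω' | ∀ i ≤ n, X i ω' = ext n (fun j : Fin (n + 1) => X j.val ω) i} :=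
      fun i hi => (ext_lt n (fun j : Fin (n + 1) => X j.val ω) i (Nat.lt_succ_of_le hi)).symm
    rw [Set.indicator_of_mem hmem]
    have hsum : ∀ i ∈ Finset.range n,
        f (ext n (fun j : Fin (n + 1) => X j.val ω) (i + 1)) = f (X (i + 1) ω) := by
      intro i hi
      have hi' : i < n := Finset.mem_range.1 hi
      rw [ext_lt n _ (i + 1) (by omega)]
    rw [Finset.sum_congr rfl hsum]
  -- integral as sum over paths
  have hint : (∫ ω, Real.exp (θ * ∑ i ∈ Finset.range n, f (X (i + 1) ω)) ∂μ)
      = ∑ p : Fin (n + 1) → S,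
          Real.exp (θ * ∑ i ∈ Finset.range n, f (ext n p (i + 1))) *
            ((if ext n p 0 = x₀ then (1 : ℝ) else 0) *
              ∏ i ∈ Finset.range n, P (ext n p i) (ext n p (i + 1))) := by
    calc (∫ ω, Real.exp (θ * ∑ i ∈ Finset.range n, f (X (i + 1) ω)) ∂μ)
        = ∫ ω, ∑ p : Fin (n + 1) → S,
            Set.indicator {ω' | ∀ i ≤ n, X i ω' = ext n p i}
              (fun _ => Real.exp (θ * ∑ i ∈ Finset.range n, f (ext n p (i + 1)))) ω ∂μ := by
          simp only [hpoint]
      _ = ∑ p : Fin (n + 1) → S, ∫ ω,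
            Set.indicator {ω' | ∀ i ≤ n, X i ω' = ext n p i}
              (fun _ => Real.exp (θ * ∑ i ∈ Finset.range n, f (ext n p (i + 1)))) ω ∂μ :=
          integral_finset_sum _ fun p _ => (integrable_const _).indicator (hcyl p)
      _ = ∑ p : Fin (n + 1) → S,
            (μ {ω' | ∀ i ≤ n, X i ω' = ext n p i}).toReal •
              Real.exp (θ * ∑ i ∈ Finset.range n, f (ext n p (i + 1))) :=
          Finset.sum_congr rfl fun p _ => integral_indicator_const _ (hcyl p)
      _ = _ := by
          refine Finset.sum_congr rfl fun p _ => ?_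
          rw [hMC n (ext n p), smul_eq_mul, mul_comm]
  -- identify integral with W Q n 1 x₀
  have hintW : (∫ ω, Real.exp (θ * ∑ i ∈ Finset.range n, f (X (i + 1) ω)) ∂μ)
      = W Q n (fun _ => (1 : ℝ)) x₀ := by
    rw [hint, ← pathSum Q (fun _ => (1 : ℝ)) n x₀]
    refine Finset.sum_congr rfl fun p _ => ?_
    rw [Finset.mul_sum, Real.exp_sum]
    have : (∏ i ∈ Finset.range n, Q (ext n p i) (ext n p (i + 1)))
        = (∏ i ∈ Finset.range n, P (ext n p i) (ext n p (i + 1))) *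
          ∏ i ∈ Finset.range n, Real.exp (θ * f (ext n p (i + 1))) := by
      rw [← Finset.prod_mul_distrib]
    rw [this]
    ring
  -- positivity facts
  have hQ0 : ∀ x y, 0 ≤ Q x y := fun x y => mul_nonneg (hP0 x y) (Real.exp_pos _).le
  have hC1 : (1 : ℝ) ≤ C := by
    have h := hC θ x₀ x₀
    have hvpos := hv θ x₀
    nlinarith
  have hCpos : (0 : ℝ) < C := lt_of_lt_of_le one_pos hC1
  have hρpos : (0 : ℝ) < ρ θ ^ n := pow_pos (hρ θ) n
  have hvne : v θ x₀ ≠ 0 := (hv θ x₀).ne'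
  have hCne : C ≠ 0 := hCpos.ne'
  -- eigenvector identity for W
  have hWv : ∀ (m : ℕ) (x : S), W Q m (v θ) x = ρ θ ^ m * v θ x := by
    intro m
    induction m with
    | zero => intro x; simp
    | succ m ih =>
      intro x
      rw [W_succ]
      calc (∑ y, Q x y * W Q m (v θ) y)
          = ρ θ ^ m * ∑ y, P x y * Real.exp (θ * f y) * v θ y := by
            rw [Finset.mul_sum]
            exact Finset.sum_congr rfl fun y _ => by rw [ih y, hQdef]; ring
        _ = ρ θ ^ m * (ρ θ * v θ x) := by rw [heig]
        _ = ρ θ ^ (m + 1) * v θ x := by ring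
  -- upper bound
  have hub : W Q n (fun _ => (1 : ℝ)) x₀ ≤ C * ρ θ ^ n := by
    have h1 : ∀ y, (1 : ℝ) ≤ (C / v θ x₀) * v θ y := by
      intro y
      rw [div_mul_eq_mul_div, le_div_iff₀ (hv θ x₀), one_mul]
      exact hC θ y x₀
    calc W Q n (fun _ => (1 : ℝ)) x₀
        ≤ W Q n (fun y => (C / v θ x₀) * v θ y) x₀ := W_mono hQ0 h1 n x₀
      _ = (C / v θ x₀) * (ρ θ ^ n * v θ x₀) := by rw [W_smul, hWv]
      _ = C * ρ θ ^ n := by field_simp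
  -- lower bound
  have hlb : ρ θ ^ n / C ≤ W Q n (fun _ => (1 : ℝ)) x₀ := by
    have h1 : ∀ y, (1 / (C * v θ x₀)) * v θ y ≤ (1 : ℝ) := by
      intro y
      rw [one_div, inv_mul_eq_div, div_le_one (mul_pos hCpos (hv θ x₀))]
      exact hC θ x₀ y
    calc ρ θ ^ n / C
        = (1 / (C * v θ x₀)) * (ρ θ ^ n * v θ x₀) := by field_simp
      _ = W Q n (fun y => (1 / (C * v θ x₀)) * v θ y) x₀ := by rw [W_smul, hWv]
      _ ≤ W Q n (fun _ => (1 : ℝ)) x₀ := W_mono hQ0 h1 n x₀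
  have hWpos : (0 : ℝ) < W Q n (fun _ => (1 : ℝ)) x₀ :=
    lt_of_lt_of_le (by positivity) hlb
  -- logarithmic bounds
  set I : ℝ := ∫ ω, Real.exp (θ * ∑ i ∈ Finset.range n, f (X (i + 1) ω)) ∂μ with hIdef
  have hIW : I = W Q n (fun _ => (1 : ℝ)) x₀ := hintW
  have hIpos : 0 < I := hIW ▸ hWpos
  have hlogub : Real.log I ≤ Real.log C + n * Real.log (ρ θ) := by
    have := Real.log_le_log hIpos (hIW ▸ hub)
    rwa [Real.log_mul hCpos.ne' hρpos.ne', Real.log_pow] at this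
  have hloglb : (n : ℝ) * Real.log (ρ θ) - Real.log C ≤ Real.log I := by
    have := Real.log_le_log (by positivity : (0:ℝ) < ρ θ ^ n / C) (hIW ▸ hlb)
    rwa [Real.log_div hρpos.ne' hCpos.ne', Real.log_pow] at this
  have habs : |Real.log I - n * Real.log (ρ θ)| ≤ Real.log C :=
    abs_le.2 ⟨by linarith, by linarith⟩
  have hn0 : (0 : ℝ) < n := by exact_mod_cast hn
  calc |(1 / (n : ℝ)) * Real.log I - Real.log (ρ θ)|
      = (1 / n) * |Real.log I - n * Real.log (ρ θ)| := by
        rw [show (1 / (n : ℝ)) * Real.log I - Real.log (ρ θ)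
            = (1 / n) * (Real.log I - n * Real.log (ρ θ)) by field_simp,
          abs_mul, abs_of_pos (by positivity)]
    _ ≤ (1 / n) * Real.log C := by
        exact mul_le_mul_of_nonneg_left habs (by positivity)
    _ = Real.log C / n := by ring
end

section
/- Let P be an irreducible stochastic matrix on a finite set S and f : S → ℝ nonconstant, with exponential family P_θ(x,y) = P(x,y)e^{θf(y)}v_θ(y)/(ρ(θ)v_θ(x)) and A(θ) = log ρ(θ). Then the derivative of A satisfies Ȧ(θ) = π_θ(f) = Σ_x π_θ(x) f(x), where π_θ is the stationary distribution of the stochastic matrix P_θ. -/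
/-!
Differentiating the eigenvalue equation `P̃_θ v_θ = ρ(θ) v_θ` gives
`P̃_θ' v_θ + P̃_θ v_θ' = ρ' v_θ + ρ v_θ'`. Pairing with a left eigenvector `u` of `P̃_θ`
cancels the unknown `v_θ'` and leaves `ρ' ⟨u, v_θ⟩ = ⟨u, P̃_θ' v_θ⟩` (Hellmann–Feynman).
Stationarity of `π_θ` for the Doob transform says exactly that `u = π_θ / v_θ` is such a left
eigenvector, and with `P̃_θ' = P̃_θ · diag f` the identity becomes `ρ' = ρ · π_θ(f)`.
-/

open Matrix Finset

section

variable {S : Type*} [Fintype S]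

theorem hellmann_feynman {M : ℝ → Matrix S S ℝ} {M' : Matrix S S ℝ} {v : ℝ → S → ℝ}
    {v' : S → ℝ} {ρ : ℝ → ℝ} {ρ' θ : ℝ} {u : S → ℝ}
    (hM : ∀ x y, HasDerivAt (fun t => M t x y) (M' x y) θ)
    (hv : ∀ x, HasDerivAt (fun t => v t x) (v' x) θ) (hρ : HasDerivAt ρ ρ' θ)
    (heig : ∀ t, M t *ᵥ v t = ρ t • v t) (hleft : u ᵥ* M θ = ρ θ • u) :
    ρ' * (u ⬝ᵥ v θ) = u ⬝ᵥ (M' *ᵥ v θ) := by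
  have hderiv : M' *ᵥ v θ + M θ *ᵥ v' = ρ' • v θ + ρ θ • v' := by
    ext x
    have hlhs : HasDerivAt (fun t => (M t *ᵥ v t) x) ((M' *ᵥ v θ) x + (M θ *ᵥ v') x) θ := by
      simp only [mulVec, dotProduct, ← sum_add_distrib]
      exact HasDerivAt.fun_sum fun y _ => (hM x y).mul (hv y)
    have hrhs : HasDerivAt (fun t => ρ t * v t x) (ρ' * v θ x + ρ θ * v' x) θ :=
      hρ.mul (hv x)
    simp only [heig, Pi.smul_apply, smul_eq_mul] at hlhs
    simpa using hlhs.unique hrhs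
  have hpaired := congrArg (u ⬝ᵥ ·) hderiv
  simp only [dotProduct_add, dotProduct_smul, smul_eq_mul] at hpaired
  rw [dotProduct_mulVec u (M θ), hleft, smul_dotProduct, smul_eq_mul] at hpaired
  linarith

noncomputable def doobTransform (Q : Matrix S S ℝ) (ρ : ℝ) (v : S → ℝ) : Matrix S S ℝ :=
  of fun x y => Q x y * v y / (ρ * v x)

theorem vecMul_div_eq_smul_of_vecMul_doobTransform {Q : Matrix S S ℝ} {ρ : ℝ} {v π : S → ℝ}
    (hρ : ρ ≠ 0) (hv : ∀ x, v x ≠ 0) (hπ : π ᵥ* doobTransform Q ρ v = π) :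
    (π / v) ᵥ* Q = ρ • (π / v) := by
  ext y
  have hy := congrFun hπ y
  simp only [vecMul, dotProduct, doobTransform, of_apply] at hy
  have hscale : ∑ x, π x * (Q x y * v y / (ρ * v x)) = v y / ρ * ∑ x, π x / v x * Q x y := by
    rw [mul_sum]
    refine sum_congr rfl fun x _ => ?_
    field_simp [hv x]
  rw [hscale] at hy
  simp only [vecMul, dotProduct, Pi.div_apply, Pi.smul_apply, smul_eq_mul]
  field_simp [hv y] at hy ⊢
  linarith

theorem div_dotProduct_mul {v : S → ℝ} (hv : ∀ x, v x ≠ 0) (π g : S → ℝ) :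
    (π / v) ⬝ᵥ (g * v) = π ⬝ᵥ g :=
  sum_congr rfl fun x _ => by
    rw [Pi.div_apply, Pi.mul_apply]
    field_simp [hv x]

noncomputable def tilt (P : Matrix S S ℝ) (f : S → ℝ) (t : ℝ) : Matrix S S ℝ :=
  of fun x y => P x y * Real.exp (t * f y)

theorem hasDerivAt_tilt [DecidableEq S] (P : Matrix S S ℝ) (f : S → ℝ) (θ : ℝ) (x y : S) :
    HasDerivAt (fun t => tilt P f t x y) ((tilt P f θ * diagonal f) x y) θ := by
  simp only [mul_diagonal, tilt, of_apply, mul_assoc]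
  exact (((hasDerivAt_id θ).mul_const (f y)).exp.congr_deriv (by simp)).const_mul (P x y)

end

theorem stmt_11_general
    {S : Type*} [Fintype S]
    (P : S → S → ℝ) (f : S → ℝ)
    (ρ : ℝ → ℝ) (v : ℝ → S → ℝ)
    (hρ : ∀ θ, 0 < ρ θ) (hv : ∀ θ x, 0 < v θ x)
    (heig : ∀ θ x, ∑ y, P x y * Real.exp (θ * f y) * v θ y = ρ θ * v θ x)
    (hρd : Differentiable ℝ ρ)
    (hvd : ∀ x, Differentiable ℝ fun θ => v θ x)
    (pi : ℝ → S → ℝ)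
    (hpi1 : ∀ θ, ∑ x, pi θ x = 1)
    (hpistat : ∀ θ y,
      ∑ x, pi θ x * (P x y * Real.exp (θ * f y) * v θ y / (ρ θ * v θ x)) = pi θ y)
    (θ : ℝ) :
    deriv (fun t => Real.log (ρ t)) θ = ∑ x, pi θ x * f x := by
  classical
  have hvθ : ∀ x, v θ x ≠ 0 := fun x => (hv θ x).ne'
  have hleft : (pi θ / v θ) ᵥ* tilt P f θ = ρ θ • (pi θ / v θ) :=
    vecMul_div_eq_smul_of_vecMul_doobTransform (hρ θ).ne' hvθ (funext (hpistat θ))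
  have hnorm : (pi θ / v θ) ⬝ᵥ v θ = 1 := by
    simpa [dotProduct, hpi1] using div_dotProduct_mul hvθ (pi θ) 1
  have hdiag : diagonal f *ᵥ v θ = f * v θ := funext (mulVec_diagonal f (v θ))
  have hmean : deriv ρ θ = ρ θ * (pi θ ⬝ᵥ f) := by
    have hHF := hellmann_feynman (hasDerivAt_tilt P f θ) (fun x => (hvd x θ).hasDerivAt)
      (hρd θ).hasDerivAt (fun t => funext (heig t)) hleft
    rwa [← mulVec_mulVec, dotProduct_mulVec, hleft, smul_dotProduct, smul_eq_mul, hdiag,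
      div_dotProduct_mul hvθ, hnorm, mul_one] at hHF
  rw [((hρd θ).hasDerivAt.log (hρ θ).ne').deriv, hmean, mul_div_cancel_left₀ _ (hρ θ).ne']
  rfl

/-- For the exponential family of stochastic matrices
`P_θ (x,y) = P x y * exp (θ f y) * v θ y / (ρ θ * v θ x)` with `A θ = log ρ θ`,
the derivative of `A` equals the stationary mean: `Ȧ(θ) = ∑ x, π_θ x * f x`. -/
theorem stmt_11
    {S : Type*} [Fintype S] [DecidableEq S]
    (P : S → S → ℝ) (f : S → ℝ)
    (hP0 : ∀ x y, 0 ≤ P x y) (hP1 : ∀ x, ∑ y, P x y = 1)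
    (hirr : ∀ x y : S, ∃ n : ℕ, 0 < ((Matrix.of P) ^ n) x y)
    (hfnc : ∃ x y : S, f x ≠ f y)
    (ρ : ℝ → ℝ) (v : ℝ → S → ℝ)
    (hρ : ∀ θ, 0 < ρ θ) (hv : ∀ θ x, 0 < v θ x)
    (heig : ∀ θ x, ∑ y, P x y * Real.exp (θ * f y) * v θ y = ρ θ * v θ x)
    (hρd : Differentiable ℝ ρ)
    (hvd : ∀ x, Differentiable ℝ fun θ => v θ x)
    (pi : ℝ → S → ℝ)
    (hpi0 : ∀ θ x, 0 ≤ pi θ x) (hpi1 : ∀ θ, ∑ x, pi θ x = 1)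
    (hpistat : ∀ θ y,
      ∑ x, pi θ x * (P x y * Real.exp (θ * f y) * v θ y / (ρ θ * v θ x)) = pi θ y)
    (θ : ℝ) :
    deriv (fun t => Real.log (ρ t)) θ = ∑ x, pi θ x * f x :=
  stmt_11_general P f ρ v hρ hv heig hρd hvd pi hpi1 hpistat θ
end

section
/- In the exponential family of stochastic matrices as above, the second derivative of A(θ) = log ρ(θ) satisfies Ä(θ) = E_{(X,Y)∼π_θ⊙P_θ}[(d/dθ log P_θ(X,Y))²] ≥ 0, where (π_θ⊙P_θ)(x,y) = π_θ(x)P_θ(x,y). In particular A is convex. -/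
/-!
Write `P_θ(x,y) = P(x,y) e^{θ f(y)} v_θ(y) / (ρ(θ) v_θ(x))`, so that
`d/dθ log P_θ(x,y) = f(y) + b_y(θ) - Ȧ(θ) - b_x(θ)` with `b_x = d/dθ log v_θ(x)`.
Since every row of `P_θ` sums to one, differentiating twice gives the Fisher identity
`∑_y P_θ(x,y) (d/dθ log P_θ(x,y))² = -∑_y P_θ(x,y) d²/dθ² log P_θ(x,y)
  = Ä(θ) + ḃ_x(θ) - ∑_y P_θ(x,y) ḃ_y(θ)`.
Averaging over `x ∼ π_θ`, the coboundary `ḃ_x - ḃ_y` cancels because `π_θ` is stationary,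
leaving `Ä(θ)`.
-/

open Finset Real

section FisherIdentity

variable {ι : Type*} [Fintype ι] {Q D D' : ℝ → ι → ℝ}

theorem sum_mul_score_eq_zero (hQ : ∀ s i, HasDerivAt (Q · i) (Q s i * D s i) s)
    (hsum : ∀ s, ∑ i, Q s i = 1) (s : ℝ) : ∑ i, Q s i * D s i = 0 := by
  have hderiv : HasDerivAt (fun u => ∑ i, Q u i) (∑ i, Q s i * D s i) s :=
    HasDerivAt.fun_sum fun i _ => hQ s i
  rw [funext hsum] at hderiv
  exact hderiv.unique (hasDerivAt_const s 1)

theorem sum_mul_score_sq_eq_neg_sum_mul_deriv (hQ : ∀ s i, HasDerivAt (Q · i) (Q s i * D s i) s)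
    (hD : ∀ s i, HasDerivAt (D · i) (D' s i) s) (hsum : ∀ s, ∑ i, Q s i = 1) (s : ℝ) :
    ∑ i, Q s i * D s i ^ 2 = -∑ i, Q s i * D' s i := by
  have hderiv : HasDerivAt (fun u => ∑ i, Q u i * D u i)
      (∑ i, (Q s i * D s i * D s i + Q s i * D' s i)) s :=
    HasDerivAt.fun_sum fun i _ => (hQ s i).fun_mul (hD s i)
  rw [funext (sum_mul_score_eq_zero hQ hsum)] at hderiv
  have h := hderiv.unique (hasDerivAt_const s 0)
  rw [sum_add_distrib] at h
  simp only [mul_assoc, ← sq] at h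
  linarith

end FisherIdentity

theorem sum_mul_sum_mul_eq_of_stationary {S : Type*} [Fintype S] {Q : S → S → ℝ} {p g : S → ℝ}
    (hp : ∀ y, ∑ x, p x * Q x y = p y) :
    ∑ x, p x * ∑ y, Q x y * g y = ∑ y, p y * g y := by
  simp only [mul_sum, ← mul_assoc]
  rw [sum_comm]
  simp only [← sum_mul, hp]

theorem differentiable_logDeriv_of_contDiff_two {g : ℝ → ℝ} (hg : ContDiff ℝ 2 g)
    (h0 : ∀ s, g s ≠ 0) : Differentiable ℝ (logDeriv g) := fun s =>
  (hg.differentiable_deriv_two s).div (hg.differentiable two_ne_zero s) (h0 s)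

noncomputable section Tilt

variable {S : Type*} (P : S → S → ℝ) (f : S → ℝ) (ρ : ℝ → ℝ) (v : ℝ → S → ℝ)

def tiltedMatrix (s : ℝ) (x y : S) : ℝ :=
  P x y * exp (s * f y) * v s y / (ρ s * v s x)

def tiltedExponent (s : ℝ) (x y : S) : ℝ :=
  s * f y + log (v s y) - log (ρ s) - log (v s x)

def tiltedScore (s : ℝ) (x y : S) : ℝ :=
  f y + logDeriv (v · y) s - logDeriv ρ s - logDeriv (v · x) s

variable {P f ρ v}

theorem tiltedMatrix_eq_mul_exp (hρ : ∀ s, 0 < ρ s) (hv : ∀ s x, 0 < v s x) (s : ℝ) (x y : S) :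
    tiltedMatrix P f ρ v s x y = P x y * exp (tiltedExponent f ρ v s x y) := by
  simp only [tiltedMatrix, tiltedExponent, exp_sub, exp_add, exp_log (hρ s), exp_log (hv s x),
    exp_log (hv s y)]
  ring

theorem sum_tiltedMatrix [Fintype S] (hρ : ∀ s, 0 < ρ s) (hv : ∀ s x, 0 < v s x)
    (heig : ∀ s x, ∑ y, P x y * exp (s * f y) * v s y = ρ s * v s x) (s : ℝ) (x : S) :
    ∑ y, tiltedMatrix P f ρ v s x y = 1 := by
  simp only [tiltedMatrix, ← sum_div, heig]
  exact div_self (mul_pos (hρ s) (hv s x)).ne'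

theorem tiltedMatrix_nonneg (hP0 : ∀ x y, 0 ≤ P x y) (hρ : ∀ s, 0 < ρ s)
    (hv : ∀ s x, 0 < v s x) (s : ℝ) (x y : S) : 0 ≤ tiltedMatrix P f ρ v s x y := by
  rw [tiltedMatrix_eq_mul_exp hρ hv]
  exact mul_nonneg (hP0 x y) (exp_pos _).le

variable (hρ : ∀ s, 0 < ρ s) (hv : ∀ s x, 0 < v s x)
include hρ hv

theorem hasDerivAt_tiltedExponent (hρd : Differentiable ℝ ρ) (hvd : ∀ x, Differentiable ℝ (v · x))
    (s : ℝ) (x y : S) :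
    HasDerivAt (tiltedExponent f ρ v · x y) (tiltedScore f ρ v s x y) s := by
  have hlogv (z : S) : HasDerivAt (fun u => log (v u z)) (logDeriv (v · z) s) s :=
    (hvd z s).hasDerivAt.log (hv s z).ne'
  have hlogρ : HasDerivAt (fun u => log (ρ u)) (logDeriv ρ s) s :=
    (hρd s).hasDerivAt.log (hρ s).ne'
  exact (((hasDerivAt_mul_const (f y)).fun_add (hlogv y)).fun_sub hlogρ).fun_sub (hlogv x)

theorem hasDerivAt_tiltedMatrix (hρd : Differentiable ℝ ρ) (hvd : ∀ x, Differentiable ℝ (v · x))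
    (s : ℝ) (x y : S) :
    HasDerivAt (tiltedMatrix P f ρ v · x y)
      (tiltedMatrix P f ρ v s x y * tiltedScore f ρ v s x y) s := by
  rw [tiltedMatrix_eq_mul_exp hρ hv s, mul_assoc]
  simp only [funext (tiltedMatrix_eq_mul_exp hρ hv · x y)]
  exact ((hasDerivAt_tiltedExponent (f := f) hρ hv hρd hvd s x y).exp).const_mul (P x y)

theorem deriv_log_tiltedMatrix (hρd : Differentiable ℝ ρ)
    (hvd : ∀ x, Differentiable ℝ (v · x)) {x y : S} (hP : P x y ≠ 0) (s : ℝ) :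
    deriv (fun u => log (tiltedMatrix P f ρ v u x y)) s = tiltedScore f ρ v s x y := by
  have hlog : (fun u => log (tiltedMatrix P f ρ v u x y))
      = fun u => log (P x y) + tiltedExponent f ρ v u x y := by
    funext u
    rw [tiltedMatrix_eq_mul_exp hρ hv, log_mul hP (exp_pos _).ne', log_exp]
  rw [hlog, deriv_const_add]
  exact (hasDerivAt_tiltedExponent (f := f) hρ hv hρd hvd s x y).deriv

theorem hasDerivAt_tiltedScore (hρ2 : ContDiff ℝ 2 ρ) (hv2 : ∀ x, ContDiff ℝ 2 (v · x))
    (s : ℝ) (x y : S) :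
    HasDerivAt (tiltedScore f ρ v · x y)
      (deriv (logDeriv (v · y)) s - deriv (logDeriv ρ) s - deriv (logDeriv (v · x)) s) s := by
  have hb (z : S) : HasDerivAt (logDeriv (v · z)) (deriv (logDeriv (v · z)) s) s :=
    (differentiable_logDeriv_of_contDiff_two (hv2 z) (fun u => (hv u z).ne') s).hasDerivAt
  have ha : HasDerivAt (logDeriv ρ) (deriv (logDeriv ρ) s) s :=
    (differentiable_logDeriv_of_contDiff_two hρ2 (fun u => (hρ u).ne') s).hasDerivAt
  simpa [tiltedScore] using (((hasDerivAt_const s (f y)).fun_add (hb y)).fun_sub ha).fun_sub (hb x)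

theorem deriv_logDeriv_eq_sum_mul_sq [Fintype S] (hρ2 : ContDiff ℝ 2 ρ)
    (hv2 : ∀ x, ContDiff ℝ 2 (v · x))
    (heig : ∀ s x, ∑ y, P x y * exp (s * f y) * v s y = ρ s * v s x)
    {p : S → ℝ} (hp1 : ∑ x, p x = 1) (s : ℝ)
    (hpstat : ∀ y, ∑ x, p x * tiltedMatrix P f ρ v s x y = p y) :
    deriv (logDeriv ρ) s = ∑ x, ∑ y, p x * tiltedMatrix P f ρ v s x y
      * deriv (fun u => log (tiltedMatrix P f ρ v u x y)) s ^ 2 := by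
  have hρd := hρ2.differentiable two_ne_zero
  have hvd (x : S) := (hv2 x).differentiable two_ne_zero
  set Q := tiltedMatrix P f ρ v
  have hQ1 (x : S) : ∑ y, Q s x y = 1 := sum_tiltedMatrix hρ hv heig s x
  set a' := deriv (logDeriv ρ) s
  set b' : S → ℝ := fun z => deriv (logDeriv (v · z)) s
  have hterm (x y : S) : Q s x y * deriv (fun u => log (Q u x y)) s ^ 2
      = Q s x y * tiltedScore f ρ v s x y ^ 2 := by
    rcases eq_or_ne (P x y) 0 with hP | hP
    · simp [Q, tiltedMatrix, hP]
    · rw [deriv_log_tiltedMatrix hρ hv hρd hvd hP]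
  have hrow (x : S) : ∑ y, Q s x y * tiltedScore f ρ v s x y ^ 2
      = a' + b' x - ∑ y, Q s x y * b' y := by
    rw [sum_mul_score_sq_eq_neg_sum_mul_deriv (Q := fun u y => Q u x y)
      (hasDerivAt_tiltedMatrix hρ hv hρd hvd · x) (hasDerivAt_tiltedScore hρ hv hρ2 hv2 · x)
      (sum_tiltedMatrix hρ hv heig · x)]
    simp only [mul_sub, sum_sub_distrib, ← sum_mul, hQ1]
    ring
  calc a' = ∑ x, p x * (a' + b' x - ∑ y, Q s x y * b' y) := by
        simp only [mul_sub, mul_add, sum_sub_distrib, sum_add_distrib, ← sum_mul, hp1,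
          sum_mul_sum_mul_eq_of_stationary hpstat]
        ring
    _ = _ := by simp only [← hrow, mul_sum, mul_assoc, hterm]

end Tilt

theorem stmt_12_general
    {S : Type*} [Fintype S]
    (P : S → S → ℝ) (f : S → ℝ)
    (hP0 : ∀ x y, 0 ≤ P x y)
    (ρ : ℝ → ℝ) (v : ℝ → S → ℝ)
    (hρ : ∀ θ, 0 < ρ θ) (hv : ∀ θ x, 0 < v θ x)
    (heig : ∀ θ x, ∑ y, P x y * Real.exp (θ * f y) * v θ y = ρ θ * v θ x)
    (hρd : ContDiff ℝ 2 ρ)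
    (hvd : ∀ x, ContDiff ℝ 2 fun θ => v θ x)
    (pi : ℝ → S → ℝ)
    (hpi0 : ∀ θ x, 0 ≤ pi θ x) (hpi1 : ∀ θ, ∑ x, pi θ x = 1)
    (hpistat : ∀ θ y,
      ∑ x, pi θ x * (P x y * Real.exp (θ * f y) * v θ y / (ρ θ * v θ x)) = pi θ y)
    (θ : ℝ) :
    deriv (deriv fun t => Real.log (ρ t)) θ
      = (∑ x, ∑ y, pi θ x * (P x y * Real.exp (θ * f y) * v θ y / (ρ θ * v θ x))
          * (deriv (fun t =>
              Real.log (P x y * Real.exp (t * f y) * v t y / (ρ t * v t x))) θ) ^ 2) ∧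
    0 ≤ deriv (deriv fun t => Real.log (ρ t)) θ ∧
    ConvexOn ℝ Set.univ (fun t => Real.log (ρ t)) := by
  have hlogρ : deriv (fun t => log (ρ t)) = logDeriv ρ :=
    funext fun t => deriv_log_comp_eq_logDeriv (hρd.differentiable two_ne_zero t) (hρ t).ne'
  have hA2 (t : ℝ) := deriv_logDeriv_eq_sum_mul_sq hρ hv hρd hvd heig (hpi1 t) t (hpistat t)
  have hA2_nonneg (t : ℝ) : 0 ≤ deriv (logDeriv ρ) t := by
    rw [hA2 t]
    exact sum_nonneg fun x _ => sum_nonneg fun y _ =>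
      mul_nonneg (mul_nonneg (hpi0 t x) (tiltedMatrix_nonneg hP0 hρ hv t x y)) (sq_nonneg _)
  have hA_diff : Differentiable ℝ (fun t => log (ρ t)) :=
    (hρd.differentiable two_ne_zero).log fun t => (hρ t).ne'
  rw [hlogρ]
  refine ⟨hA2 θ, hA2_nonneg θ, convexOn_univ_of_deriv2_nonneg hA_diff ?_ fun t => ?_⟩
  · rw [hlogρ]
    exact differentiable_logDeriv_of_contDiff_two hρd fun t => (hρ t).ne'
  · simpa [hlogρ] using hA2_nonneg t

/-- For the exponential family of stochastic matrices, the second derivative of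
`A θ = log ρ θ` equals the expectation, under the invariant pair distribution
`π_θ ⊙ P_θ`, of the square of `d/dθ log P_θ (X,Y)`; in particular it is
nonnegative and `A` is convex. -/
theorem stmt_12
    {S : Type*} [Fintype S] [DecidableEq S]
    (P : S → S → ℝ) (f : S → ℝ)
    (hP0 : ∀ x y, 0 ≤ P x y) (hP1 : ∀ x, ∑ y, P x y = 1)
    (hirr : ∀ x y : S, ∃ n : ℕ, 0 < ((Matrix.of P) ^ n) x y)
    (ρ : ℝ → ℝ) (v : ℝ → S → ℝ)
    (hρ : ∀ θ, 0 < ρ θ) (hv : ∀ θ x, 0 < v θ x)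
    (heig : ∀ θ x, ∑ y, P x y * Real.exp (θ * f y) * v θ y = ρ θ * v θ x)
    (hρd : ContDiff ℝ 2 ρ)
    (hvd : ∀ x, ContDiff ℝ 2 fun θ => v θ x)
    (pi : ℝ → S → ℝ)
    (hpi0 : ∀ θ x, 0 ≤ pi θ x) (hpi1 : ∀ θ, ∑ x, pi θ x = 1)
    (hpistat : ∀ θ y,
      ∑ x, pi θ x * (P x y * Real.exp (θ * f y) * v θ y / (ρ θ * v θ x)) = pi θ y)
    (θ : ℝ) :
    deriv (deriv fun t => Real.log (ρ t)) θ
      = (∑ x, ∑ y, pi θ x * (P x y * Real.exp (θ * f y) * v θ y / (ρ θ * v θ x))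
          * (deriv (fun t =>
              Real.log (P x y * Real.exp (t * f y) * v t y / (ρ t * v t x))) θ) ^ 2) ∧
    0 ≤ deriv (deriv fun t => Real.log (ρ t)) θ ∧
    ConvexOn ℝ Set.univ (fun t => Real.log (ρ t)) :=
  stmt_12_general P f hP0 ρ v hρ hv heig hρd hvd pi hpi0 hpi1 hpistat θ
end

section
/- For the exponential family of stochastic matrices with A(θ) = log ρ(θ) and Kullback–Leibler divergence rate KL(θ₁‖θ₂) = Σ_{x,y} π_{θ₁}(x)P_{θ₁}(x,y) log(P_{θ₁}(x,y)/P_{θ₂}(x,y)), one has for all real θ₁, θ₂: KL(θ₁‖θ₂) = θ₁Ȧ(θ₁) − A(θ₁) − (θ₂Ȧ(θ₁) − A(θ₂)) = A(θ₂) − A(θ₁) − (θ₂ − θ₁)Ȧ(θ₁). -/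
/-!
Write `Pθ` for the tilted matrix. Its logarithmic ratio splits as
`log (Pθ₁ x y / Pθ₂ x y) = (θ₁ - θ₂) f y + log ρ θ₂ - log ρ θ₁ + h y - h x` with
`h = log (vθ₁ / vθ₂)`, and the coboundary `h y - h x` has mean zero under the stationary
edge measure `πθ₁(x) Pθ₁(x, y)`, whose two marginals are both `πθ₁`. Hence the KL rate is
`(θ₁ - θ₂) πθ₁(f) + A(θ₂) - A(θ₁)`. Differentiating the eigenvalue equation and averaging
against `πθ` in the same way gives `πθ(f) = ρ'(θ) / ρ(θ) = Ȧ(θ)`.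
-/

open Real Finset

theorem sum_sum_mul_add_coboundary_of_stationary {S : Type*} [Fintype S] {Q : S → S → ℝ} {μ : S → ℝ}
    (hstat : ∀ y, ∑ x, μ x * Q x y = μ y) (hrow : ∀ x, ∑ y, Q x y = 1) (a g : S → ℝ) :
    ∑ x, ∑ y, μ x * Q x y * (a y + (g y - g x)) = ∑ y, μ y * a y := by
  have hright (b : S → ℝ) : ∑ x, ∑ y, μ x * Q x y * b y = ∑ y, μ y * b y := by
    rw [sum_comm]
    exact sum_congr rfl fun y _ => by rw [← sum_mul, hstat]
  have hleft : ∑ x, ∑ y, μ x * Q x y * g x = ∑ x, μ x * g x :=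
    sum_congr rfl fun x _ => by rw [← sum_mul, ← mul_sum, hrow, mul_one]
  simp only [mul_add, mul_sub, sum_add_distrib, sum_sub_distrib, hright, hleft, sub_self,
    add_zero]

namespace TiltedMarkov

variable {S : Type*} (P : S → S → ℝ) (f : S → ℝ) (ρ : ℝ → ℝ) (v : ℝ → S → ℝ)

noncomputable def tilt (θ : ℝ) (x y : S) : ℝ :=
  P x y * exp (θ * f y) * v θ y / (ρ θ * v θ x)

variable {P f ρ v}

theorem log_tilt_div_tilt (hρ : ∀ θ, 0 < ρ θ) (hv : ∀ θ x, 0 < v θ x) {x y : S}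
    (hP : P x y ≠ 0) (θ₁ θ₂ : ℝ) :
    log (tilt P f ρ v θ₁ x y / tilt P f ρ v θ₂ x y)
      = (θ₁ - θ₂) * f y + (log (ρ θ₂) - log (ρ θ₁))
        + (log (v θ₁ y / v θ₂ y) - log (v θ₁ x / v θ₂ x)) := by
  have hρ₁ := hρ θ₁; have hρ₂ := hρ θ₂
  have hvx₁ := hv θ₁ x; have hvx₂ := hv θ₂ x; have hvy₁ := hv θ₁ y; have hvy₂ := hv θ₂ y
  have hratio : tilt P f ρ v θ₁ x y / tilt P f ρ v θ₂ x y
      = exp ((θ₁ - θ₂) * f y) * (ρ θ₂ / ρ θ₁) * ((v θ₁ y / v θ₂ y) / (v θ₁ x / v θ₂ x)) := by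
    simp only [tilt]
    rw [sub_mul, exp_sub]
    field_simp
  rw [hratio, log_mul (by positivity) (by positivity), log_mul (by positivity) (by positivity),
    log_exp, log_div hρ₂.ne' hρ₁.ne', log_div (by positivity) (by positivity)]

variable [Fintype S]

theorem sum_tilt_eq_one (hρ : ∀ θ, 0 < ρ θ) (hv : ∀ θ x, 0 < v θ x)
    (heig : ∀ θ x, ∑ y, P x y * exp (θ * f y) * v θ y = ρ θ * v θ x) (θ : ℝ) (x : S) :
    ∑ y, tilt P f ρ v θ x y = 1 := by
  simp only [tilt]
  rw [← sum_div, heig, div_self (mul_pos (hρ θ) (hv θ x)).ne']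

theorem klRate_tilt_eq (hρ : ∀ θ, 0 < ρ θ) (hv : ∀ θ x, 0 < v θ x)
    (heig : ∀ θ x, ∑ y, P x y * exp (θ * f y) * v θ y = ρ θ * v θ x)
    {μ : S → ℝ} {θ₁ : ℝ} (hμ1 : ∑ x, μ x = 1)
    (hstat : ∀ y, ∑ x, μ x * tilt P f ρ v θ₁ x y = μ y) (θ₂ : ℝ) :
    ∑ x, ∑ y, μ x * tilt P f ρ v θ₁ x y
        * log (tilt P f ρ v θ₁ x y / tilt P f ρ v θ₂ x y)
      = (θ₁ - θ₂) * ∑ y, μ y * f y + (log (ρ θ₂) - log (ρ θ₁)) := by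
  set c := log (ρ θ₂) - log (ρ θ₁)
  have hterm (x y : S) : μ x * tilt P f ρ v θ₁ x y
        * log (tilt P f ρ v θ₁ x y / tilt P f ρ v θ₂ x y)
      = μ x * tilt P f ρ v θ₁ x y * (((θ₁ - θ₂) * f y + c)
          + (log (v θ₁ y / v θ₂ y) - log (v θ₁ x / v θ₂ x))) := by
    by_cases hP : P x y = 0
    · simp [tilt, hP]
    · rw [log_tilt_div_tilt hρ hv hP, add_assoc]
  simp only [hterm]
  rw [sum_sum_mul_add_coboundary_of_stationary hstat (sum_tilt_eq_one hρ hv heig θ₁)]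
  simp only [mul_add, sum_add_distrib, ← sum_mul, hμ1, one_mul, mul_left_comm _ (θ₁ - θ₂),
    ← mul_sum]

theorem sum_mul_exp_mul_deriv_eq (heig : ∀ θ x, ∑ y, P x y * exp (θ * f y) * v θ y = ρ θ * v θ x)
    (hρd : Differentiable ℝ ρ) (hvd : ∀ x, Differentiable ℝ fun θ => v θ x) (θ : ℝ) (x : S) :
    ∑ y, P x y * exp (θ * f y) * (f y * v θ y + deriv (fun t => v t y) θ)
      = deriv ρ θ * v θ x + ρ θ * deriv (fun t => v t x) θ := by
  have hsum : HasDerivAt (fun t => ∑ y, P x y * exp (t * f y) * v t y)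
      (∑ y, P x y * exp (θ * f y) * (f y * v θ y + deriv (fun t => v t y) θ)) θ := by
    refine HasDerivAt.fun_sum fun y _ => ?_
    refine (((((hasDerivAt_id θ).mul_const (f y)).exp).const_mul (P x y)).fun_mul
      (hvd y θ).hasDerivAt).congr_deriv ?_
    simp only [id, one_mul]
    ring
  have heig' : (fun t => ∑ y, P x y * exp (t * f y) * v t y) = fun t => ρ t * v t x :=
    funext fun t => heig t x
  rw [heig'] at hsum
  exact hsum.unique ((hρd θ).hasDerivAt.mul (hvd x θ).hasDerivAt)

theorem sum_tilt_mul_add_logDeriv (hρ : ∀ θ, 0 < ρ θ) (hv : ∀ θ x, 0 < v θ x)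
    (heig : ∀ θ x, ∑ y, P x y * exp (θ * f y) * v θ y = ρ θ * v θ x)
    (hρd : Differentiable ℝ ρ) (hvd : ∀ x, Differentiable ℝ fun θ => v θ x) (θ : ℝ) (x : S) :
    ∑ y, tilt P f ρ v θ x y * (f y + (deriv (fun t => v t y) θ / v θ y
        - deriv (fun t => v t x) θ / v θ x))
      = deriv ρ θ / ρ θ := by
  have hρθ := (hρ θ).ne'
  have hvx := (hv θ x).ne'
  have hterm (y : S) : tilt P f ρ v θ x y * (f y + (deriv (fun t => v t y) θ / v θ y
        - deriv (fun t => v t x) θ / v θ x))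
      = P x y * exp (θ * f y) * (f y * v θ y + deriv (fun t => v t y) θ) / (ρ θ * v θ x)
        - tilt P f ρ v θ x y * (deriv (fun t => v t x) θ / v θ x) := by
    have hvy := (hv θ y).ne'
    rw [tilt]
    field_simp
    ring
  rw [sum_congr rfl fun y _ => hterm y, sum_sub_distrib, ← sum_div, ← sum_mul,
    sum_mul_exp_mul_deriv_eq heig hρd hvd, sum_tilt_eq_one hρ hv heig]
  field_simp
  ring

theorem sum_stationary_mul_eq_deriv_div (hρ : ∀ θ, 0 < ρ θ) (hv : ∀ θ x, 0 < v θ x)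
    (heig : ∀ θ x, ∑ y, P x y * exp (θ * f y) * v θ y = ρ θ * v θ x)
    (hρd : Differentiable ℝ ρ) (hvd : ∀ x, Differentiable ℝ fun θ => v θ x)
    {μ : S → ℝ} {θ : ℝ} (hμ1 : ∑ x, μ x = 1)
    (hstat : ∀ y, ∑ x, μ x * tilt P f ρ v θ x y = μ y) :
    ∑ y, μ y * f y = deriv ρ θ / ρ θ := by
  set g := fun y => deriv (fun t => v t y) θ / v θ y
  rw [← sum_sum_mul_add_coboundary_of_stationary hstat (sum_tilt_eq_one hρ hv heig θ) f g]
  simp only [mul_assoc, ← mul_sum, g, sum_tilt_mul_add_logDeriv hρ hv heig hρd hvd, ← sum_mul,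
    hμ1, one_mul]

end TiltedMarkov

open TiltedMarkov in
theorem stmt_13_general
    {S : Type*} [Fintype S]
    (P : S → S → ℝ) (f : S → ℝ)
    (ρ : ℝ → ℝ) (v : ℝ → S → ℝ)
    (hρ : ∀ θ, 0 < ρ θ) (hv : ∀ θ x, 0 < v θ x)
    (heig : ∀ θ x, ∑ y, P x y * Real.exp (θ * f y) * v θ y = ρ θ * v θ x)
    (hρd : Differentiable ℝ ρ)
    (hvd : ∀ x, Differentiable ℝ fun θ => v θ x)
    (pi : ℝ → S → ℝ)
    (hpi1 : ∀ θ, ∑ x, pi θ x = 1)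
    (hpistat : ∀ θ y,
      ∑ x, pi θ x * (P x y * Real.exp (θ * f y) * v θ y / (ρ θ * v θ x)) = pi θ y)
    (θ₁ θ₂ : ℝ) :
    (∑ x, ∑ y, pi θ₁ x * (P x y * Real.exp (θ₁ * f y) * v θ₁ y / (ρ θ₁ * v θ₁ x))
        * Real.log ((P x y * Real.exp (θ₁ * f y) * v θ₁ y / (ρ θ₁ * v θ₁ x))
            / (P x y * Real.exp (θ₂ * f y) * v θ₂ y / (ρ θ₂ * v θ₂ x))))
      = θ₁ * deriv (fun t => Real.log (ρ t)) θ₁ - Real.log (ρ θ₁)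
          - (θ₂ * deriv (fun t => Real.log (ρ t)) θ₁ - Real.log (ρ θ₂)) ∧
    (∑ x, ∑ y, pi θ₁ x * (P x y * Real.exp (θ₁ * f y) * v θ₁ y / (ρ θ₁ * v θ₁ x))
        * Real.log ((P x y * Real.exp (θ₁ * f y) * v θ₁ y / (ρ θ₁ * v θ₁ x))
            / (P x y * Real.exp (θ₂ * f y) * v θ₂ y / (ρ θ₂ * v θ₂ x))))
      = Real.log (ρ θ₂) - Real.log (ρ θ₁)
          - (θ₂ - θ₁) * deriv (fun t => Real.log (ρ t)) θ₁ := by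
  have hA : deriv (fun t => log (ρ t)) θ₁ = deriv ρ θ₁ / ρ θ₁ :=
    ((hρd θ₁).hasDerivAt.log (hρ θ₁).ne').deriv
  have hKL := klRate_tilt_eq hρ hv heig (hpi1 θ₁) (hpistat θ₁) θ₂
  rw [sum_stationary_mul_eq_deriv_div hρ hv heig hρd hvd (hpi1 θ₁) (hpistat θ₁), ← hA] at hKL
  exact ⟨hKL.trans (by ring), hKL.trans (by ring)⟩

/-- For the exponential family of stochastic matrices, the KL divergence rate
between parameters `θ₁` and `θ₂` equals the Bregman divergence of
`A θ = log ρ θ`: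
`KL(θ₁‖θ₂) = θ₁ Ȧ(θ₁) − A(θ₁) − (θ₂ Ȧ(θ₁) − A(θ₂)) = A(θ₂) − A(θ₁) − (θ₂−θ₁) Ȧ(θ₁)`. -/
theorem stmt_13
    {S : Type*} [Fintype S] [DecidableEq S]
    (P : S → S → ℝ) (f : S → ℝ)
    (hP0 : ∀ x y, 0 ≤ P x y) (hP1 : ∀ x, ∑ y, P x y = 1)
    (hirr : ∀ x y : S, ∃ n : ℕ, 0 < ((Matrix.of P) ^ n) x y)
    (ρ : ℝ → ℝ) (v : ℝ → S → ℝ)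
    (hρ : ∀ θ, 0 < ρ θ) (hv : ∀ θ x, 0 < v θ x)
    (heig : ∀ θ x, ∑ y, P x y * Real.exp (θ * f y) * v θ y = ρ θ * v θ x)
    (hρd : Differentiable ℝ ρ)
    (hvd : ∀ x, Differentiable ℝ fun θ => v θ x)
    (pi : ℝ → S → ℝ)
    (hpi0 : ∀ θ x, 0 ≤ pi θ x) (hpi1 : ∀ θ, ∑ x, pi θ x = 1)
    (hpistat : ∀ θ y,
      ∑ x, pi θ x * (P x y * Real.exp (θ * f y) * v θ y / (ρ θ * v θ x)) = pi θ y)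
    (θ₁ θ₂ : ℝ) :
    (∑ x, ∑ y, pi θ₁ x * (P x y * Real.exp (θ₁ * f y) * v θ₁ y / (ρ θ₁ * v θ₁ x))
        * Real.log ((P x y * Real.exp (θ₁ * f y) * v θ₁ y / (ρ θ₁ * v θ₁ x))
            / (P x y * Real.exp (θ₂ * f y) * v θ₂ y / (ρ θ₂ * v θ₂ x))))
      = θ₁ * deriv (fun t => Real.log (ρ t)) θ₁ - Real.log (ρ θ₁)
          - (θ₂ * deriv (fun t => Real.log (ρ t)) θ₁ - Real.log (ρ θ₂)) ∧
    (∑ x, ∑ y, pi θ₁ x * (P x y * Real.exp (θ₁ * f y) * v θ₁ y / (ρ θ₁ * v θ₁ x))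
        * Real.log ((P x y * Real.exp (θ₁ * f y) * v θ₁ y / (ρ θ₁ * v θ₁ x))
            / (P x y * Real.exp (θ₂ * f y) * v θ₂ y / (ρ θ₂ * v θ₂ x))))
      = Real.log (ρ θ₂) - Real.log (ρ θ₁)
          - (θ₂ - θ₁) * deriv (fun t => Real.log (ρ t)) θ₁ :=
  stmt_13_general P f ρ v hρ hv heig hρd hvd pi hpi1 hpistat θ₁ θ₂
end

section
/- For a ∈ [0,1] and μ, λ in the mean parameter space with μ > λ, the generalized Jensen–Shannon divergence I_a(μ, λ) = a·KL(μ‖aμ+(1−a)λ) + (1−a)·KL(λ‖aμ+(1−a)λ) satisfies the variational characterization I_a(μ, λ) = inf_{μ' ≤ λ'} { a·KL(μ‖μ') + (1−a)·KL(λ‖λ') }, where the infimum is taken over pairs (μ', λ') with μ' ≤ λ'. -/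
/-- Bregman divergence of a strictly convex differentiable function is nonnegative. -/
lemma bregman_nonneg (F : ℝ → ℝ) (hF : Differentiable ℝ F)
    (hconv : StrictConvexOn ℝ Set.univ F) (x y : ℝ) :
    0 ≤ F x - F y - deriv F y * (x - y) := by
  rcases lt_trichotomy x y with hxy | rfl | hxy
  · have := hconv.slope_lt_deriv (Set.mem_univ x) (Set.mem_univ y) hxy (hF y)
    rw [slope_def_field] at this
    have hy : 0 < y - x := by linarith
    rw [div_lt_iff₀ hy] at this
    nlinarith
  · simp
  · have := hconv.deriv_lt_slope (Set.mem_univ y) (Set.mem_univ x) hxy (hF y)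
    rw [slope_def_field] at this
    have hy : 0 < x - y := by linarith
    rw [lt_div_iff₀ hy] at this
    nlinarith

/-- Variational characterization of the generalized Jensen–Shannon divergence:
with `KL` the Bregman divergence of a strictly convex differentiable `F`, for
`a ∈ [0,1]` and `μ > λ`,
`a·KL(μ‖aμ+(1−a)λ) + (1−a)·KL(λ‖aμ+(1−a)λ)
  = inf_{μ' ≤ λ'} (a·KL(μ‖μ') + (1−a)·KL(λ‖λ'))`. -/
theorem stmt_16
    (F : ℝ → ℝ) (hF : Differentiable ℝ F)
    (hconv : StrictConvexOn ℝ Set.univ F)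
    (a : ℝ) (ha : a ∈ Set.Icc (0 : ℝ) 1)
    (μ lam : ℝ) (h : lam < μ) :
    a * (F μ - F (a * μ + (1 - a) * lam)
          - deriv F (a * μ + (1 - a) * lam) * (μ - (a * μ + (1 - a) * lam)))
      + (1 - a) * (F lam - F (a * μ + (1 - a) * lam)
          - deriv F (a * μ + (1 - a) * lam) * (lam - (a * μ + (1 - a) * lam)))
      = ⨅ p : {p : ℝ × ℝ // p.1 ≤ p.2},
          (a * (F μ - F p.1.1 - deriv F p.1.1 * (μ - p.1.1))
            + (1 - a) * (F lam - F p.1.2 - deriv F p.1.2 * (lam - p.1.2))) := by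
  obtain ⟨ha0, ha1⟩ := ha
  haveI : Nonempty {p : ℝ × ℝ // p.1 ≤ p.2} := ⟨⟨(0, 0), le_rfl⟩⟩
  have hmono : Monotone (deriv F) := by
    have := hconv.strictMonoOn_deriv (fun x _ => hF x)
    exact (strictMonoOn_univ.mp this).monotone
  -- key lower bound
  have key : ∀ p : {p : ℝ × ℝ // p.1 ≤ p.2},
      a * (F μ - F (a * μ + (1 - a) * lam)
          - deriv F (a * μ + (1 - a) * lam) * (μ - (a * μ + (1 - a) * lam)))
        + (1 - a) * (F lam - F (a * μ + (1 - a) * lam)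
          - deriv F (a * μ + (1 - a) * lam) * (lam - (a * μ + (1 - a) * lam)))
      ≤ a * (F μ - F p.1.1 - deriv F p.1.1 * (μ - p.1.1))
        + (1 - a) * (F lam - F p.1.2 - deriv F p.1.2 * (lam - p.1.2)) := by
    rintro ⟨⟨x, y⟩, hxy⟩
    simp only at hxy ⊢
    have h1 := bregman_nonneg F hF hconv (a * μ + (1 - a) * lam) x
    have h2 := bregman_nonneg F hF hconv (a * μ + (1 - a) * lam) y
    have h3 : deriv F x ≤ deriv F y := hmono hxy
    have h4 : 0 ≤ a * (1 - a) * ((μ - lam) * (deriv F y - deriv F x)) := by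
      apply mul_nonneg (mul_nonneg ha0 (by linarith))
      apply mul_nonneg (by linarith) (by linarith)
    nlinarith [mul_nonneg ha0 h1, mul_nonneg (by linarith : (0:ℝ) ≤ 1 - a) h2]
  have hbdd : BddBelow (Set.range fun p : {p : ℝ × ℝ // p.1 ≤ p.2} =>
      a * (F μ - F p.1.1 - deriv F p.1.1 * (μ - p.1.1))
        + (1 - a) * (F lam - F p.1.2 - deriv F p.1.2 * (lam - p.1.2))) := by
    refine ⟨a * (F μ - F (a * μ + (1 - a) * lam)
          - deriv F (a * μ + (1 - a) * lam) * (μ - (a * μ + (1 - a) * lam)))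
        + (1 - a) * (F lam - F (a * μ + (1 - a) * lam)
          - deriv F (a * μ + (1 - a) * lam) * (lam - (a * μ + (1 - a) * lam))), ?_⟩
    rintro _ ⟨p, rfl⟩
    exact key p
  refine le_antisymm (le_ciInf key) ?_
  exact ciInf_le hbdd ⟨(a * μ + (1 - a) * lam, a * μ + (1 - a) * lam), le_rfl⟩
end
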